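/- arXiv:2011.04483 — 6 statements merged into one kernel-verified Lean document; each statement's English description precedes it below -/
import Mathlib

section
/- Theorem 3.1 (dichotomy for online learning): Let 𝒳 be a set and ℋ a set of functions h : 𝒳 → {0,1}. (i) If ℋ does not have an infinite Littlestone tree, then there is a strategy for the learner in the online learning game that makes only finitely many mistakes against every adversary. (ii) If ℋ has an infinite Littlestone tree, then there is a strategy for the adversary that forces every learner to make a mistake in every round. In particular, ℋ is online learnable if and only if it has no infinite Littlestone tree. -/
variable {𝒳 : Type*}

/-- `ℋ` has an infinite Littlestone tree: nodes are indexed by finite binary strings, and every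
finite branch is consistent with some concept in `ℋ`. -/
def HasInfiniteLittlestoneTree (ℋ : Set (𝒳 → Bool)) : Prop :=
  ∃ x : List Bool → 𝒳, ∀ (y : ℕ → Bool) (n : ℕ),
    ∃ h ∈ ℋ, ∀ k ≤ n, h (x (List.ofFn fun i : Fin k => y i)) = y k

/-- The sequence `(x_t, y_t)` is realizable by `ℋ`: every finite prefix is consistent with some
concept in `ℋ`. -/
def RealizableSeq (ℋ : Set (𝒳 → Bool)) (x : ℕ → 𝒳) (y : ℕ → Bool) : Prop :=
  ∀ T : ℕ, ∃ h ∈ ℋ, ∀ t ≤ T, h (x t) = y t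

/-- The set of rounds at which a learner strategy `S` (mapping the history
`x_1,y_1,…,x_{t-1},y_{t-1}` together with the current point `x_t` to a prediction `yhat_t`)
makes a mistake on the sequence `(x_t, y_t)`. -/
def Mistakes (S : List (𝒳 × Bool) → 𝒳 → Bool) (x : ℕ → 𝒳) (y : ℕ → Bool) : Set ℕ :=
  {t : ℕ | S (List.ofFn fun i : Fin t => (x i, y i)) (x t) ≠ y t}

/-- `ℋ` is online learnable: some learner strategy makes only finitely many mistakes on every
realizable sequence. -/
def OnlineLearnable (ℋ : Set (𝒳 → Bool)) : Prop :=
  ∃ S : List (𝒳 × Bool) → 𝒳 → Bool,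
    ∀ (x : ℕ → 𝒳) (y : ℕ → Bool), RealizableSeq ℋ x y → (Mistakes S x y).Finite

/-!
Consider the game in which the adversary plays points `a`, the learner answers labels `b`, the
version space `H` shrinks to `{h ∈ H | h a = b}`, and the learner wins once it is empty. If the
learner has no winning strategy from `H`, the adversary has a point at which neither answer gives
the learner one; iterating this choice yields an infinite Littlestone tree. A winning strategy, on
the other hand, is a well-founded tree: the online learner that predicts the opposite of the
strategy's answer, and moves down the strategy only when it errs, keeps every consistent concept
in its version space, which therefore never becomes empty on a realizable sequence, so it errs only
finitely often. Given an infinite Littlestone tree, the adversary walks down the tree along the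
negations of the learner's predictions.
-/

theorem List.ofFn_succ_eq_append {α : Type*} (f : ℕ → α) (t : ℕ) :
    (List.ofFn fun i : Fin (t + 1) => f i) = (List.ofFn fun i : Fin t => f i) ++ [f t] :=
  List.ofFn_succ_last

theorem exists_seq_forall_eq_apply_ofFn {α : Type*} (F : List α → α) :
    ∃ z : ℕ → α, ∀ t, z t = F (List.ofFn fun i : Fin t => z i) := by
  let prefixes : ℕ → List α := fun t => Nat.rec [] (fun _ l => l ++ [F l]) t
  have hprefixes : ∀ t, prefixes t = List.ofFn fun i : Fin t => F (prefixes i) := by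
    intro t
    induction t with
    | zero => rfl
    | succ t ih =>
      rw [List.ofFn_succ_eq_append (fun i => F (prefixes i)), ← ih]
  exact ⟨fun t => F (prefixes t), fun t => by rw [← hprefixes]⟩

theorem WellFounded.finite_setOf_rel_apply_succ {α : Type*} {r : α → α → Prop}
    (hr : WellFounded r) {s : ℕ → α} (hs : ∀ t, s (t + 1) = s t ∨ r (s (t + 1)) (s t)) :
    {t | r (s (t + 1)) (s t)}.Finite := by
  have hchain : ∀ t t', t ≤ t' → Relation.ReflTransGen r (s t') (s t) := by
    intro t t' htt'
    induction t', htt' using Nat.le_induction with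
    | base => exact .refl
    | succ t' _ ih =>
      rcases hs t' with heq | hstep
      · rwa [heq]
      · exact .head hstep ih
  by_contra hinf
  let e := Nat.nth (· ∈ {t | r (s (t + 1)) (s t)})
  have hdesc : ∀ n, Relation.TransGen r (s (e (n + 1))) (s (e n)) := fun n =>
    .tail' (hchain _ _ (Nat.nth_strictMono hinf n.lt_succ_self)) (Nat.nth_mem_of_infinite hinf n)
  exact (wellFounded_iff_isEmpty_descending_chain.1 hr.transGen).false ⟨fun n => s (e n), hdesc⟩

namespace Littlestone

def restrict (H : Set (𝒳 → Bool)) (a : 𝒳) (b : Bool) : Set (𝒳 → Bool) := {h ∈ H | h a = b}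

/-- Kept as data: the learner follows the answers `f` stored in the strategy, which a
`Prop`-valued version would only assert to exist. -/
inductive WinningStrategy : Set (𝒳 → Bool) → Type _
  | empty : WinningStrategy ∅
  | node {H : Set (𝒳 → Bool)} (f : 𝒳 → Bool) (next : ∀ a, WinningStrategy (restrict H a (f a))) :
      WinningStrategy H

theorem exists_forall_isEmpty_winningStrategy_restrict {H : Set (𝒳 → Bool)}
    (hH : IsEmpty (WinningStrategy H)) :
    ∃ a : 𝒳, ∀ b, IsEmpty (WinningStrategy (restrict H a b)) := by
  by_contra! hwin
  choose f hf using hwin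
  exact hH.false (.node f fun a => (hf a).some)

theorem nonempty_of_isEmpty_winningStrategy {H : Set (𝒳 → Bool)}
    (hH : IsEmpty (WinningStrategy H)) : H.Nonempty :=
  Set.nonempty_iff_ne_empty.2 fun h => hH.false (h ▸ .empty)

variable (𝒳) in
def LosingPosition : Type _ := {H : Set (𝒳 → Bool) // IsEmpty (WinningStrategy H)}

namespace LosingPosition

noncomputable def point (V : LosingPosition 𝒳) : 𝒳 :=
  (exists_forall_isEmpty_winningStrategy_restrict V.2).choose

noncomputable def child (V : LosingPosition 𝒳) (b : Bool) : LosingPosition 𝒳 :=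
  ⟨restrict V.1 V.point b, (exists_forall_isEmpty_winningStrategy_restrict V.2).choose_spec b⟩

noncomputable def descend (V : LosingPosition 𝒳) (u : List Bool) : LosingPosition 𝒳 :=
  u.foldl child V

theorem descend_ofFn_succ (V : LosingPosition 𝒳) (y : ℕ → Bool) (k : ℕ) :
    V.descend (List.ofFn fun i : Fin (k + 1) => y i) =
      (V.descend (List.ofFn fun i : Fin k => y i)).child (y k) := by
  rw [descend, List.ofFn_succ_eq_append, List.foldl_concat, descend]

theorem hasInfiniteLittlestoneTree (V : LosingPosition 𝒳) : HasInfiniteLittlestoneTree V.1 := by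
  refine ⟨fun u => (V.descend u).point, fun y n => ?_⟩
  let branch : ℕ → Set (𝒳 → Bool) := fun k => (V.descend (List.ofFn fun i : Fin k => y i)).1
  have hbranch : Antitone branch := antitone_nat_of_succ_le fun k => by
    simp only [branch, descend_ofFn_succ, child, restrict, Set.sep_subset]
  obtain ⟨h, hh⟩ := nonempty_of_isEmpty_winningStrategy (V.descend _).2
  refine ⟨h, hbranch (Nat.zero_le (n + 1)) hh, fun k hk => ?_⟩
  have hk : h ∈ branch (k + 1) := hbranch (Nat.succ_le_succ hk) hh
  simp only [branch, descend_ofFn_succ] at hk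
  exact hk.2

end LosingPosition

theorem nonempty_winningStrategy_of_not_hasInfiniteLittlestoneTree {H : Set (𝒳 → Bool)}
    (hH : ¬ HasInfiniteLittlestoneTree H) : Nonempty (WinningStrategy H) := by
  by_contra hlose
  exact hH (LosingPosition.hasInfiniteLittlestoneTree ⟨H, not_nonempty_iff.1 hlose⟩)

variable (𝒳) in
abbrev Position : Type _ := Σ H : Set (𝒳 → Bool), WinningStrategy H

namespace Position

def predict : Position 𝒳 → 𝒳 → Bool
  | ⟨_, .empty⟩, _ => true
  | ⟨_, .node f _⟩, a => !f a

def advance : Position 𝒳 → 𝒳 → Position 𝒳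
  | ⟨_, .empty⟩, _ => ⟨∅, .empty⟩
  | ⟨_, .node _ next⟩, a => ⟨_, next a⟩

def update (s : Position 𝒳) (p : 𝒳 × Bool) : Position 𝒳 :=
  if s.predict p.1 = p.2 then s else s.advance p.1

inductive Child : Position 𝒳 → Position 𝒳 → Prop
  | node {H : Set (𝒳 → Bool)} (f : 𝒳 → Bool) (next : ∀ a, WinningStrategy (restrict H a (f a)))
      (a : 𝒳) : Child ⟨_, next a⟩ ⟨H, .node f next⟩

theorem wellFounded_child : WellFounded (Child (𝒳 := 𝒳)) := by
  refine ⟨fun ⟨H, d⟩ => ?_⟩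
  induction d with
  | empty => exact ⟨_, by rintro _ ⟨⟩⟩
  | node f next ih => exact ⟨_, by rintro _ ⟨⟩; exact ih _⟩

theorem mem_update {s : Position 𝒳} {p : 𝒳 × Bool} {h : 𝒳 → Bool} (hs : h ∈ s.1)
    (hp : h p.1 = p.2) : h ∈ (s.update p).1 := by
  unfold update
  split_ifs with hpredict
  · exact hs
  · obtain ⟨H, _ | ⟨f, next⟩⟩ := s
    · exact hs
    · have : p.2 = f p.1 := by simpa [predict] using Ne.symm hpredict
      exact ⟨hs, hp.trans this⟩

theorem child_update_of_predict_ne {s : Position 𝒳} {p : 𝒳 × Bool} (hs : s.1.Nonempty)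
    (hpredict : s.predict p.1 ≠ p.2) : Child (s.update p) s := by
  rw [update, if_neg hpredict]
  obtain ⟨H, _ | ⟨f, next⟩⟩ := s
  · exact absurd hs Set.not_nonempty_empty
  · exact .node f next p.1

def learner (s₀ : Position 𝒳) (history : List (𝒳 × Bool)) : 𝒳 → Bool :=
  (history.foldl update s₀).predict

def run (s₀ : Position 𝒳) (x : ℕ → 𝒳) (y : ℕ → Bool) (t : ℕ) : Position 𝒳 :=
  (List.ofFn fun i : Fin t => (x i, y i)).foldl update s₀

variable (s₀ : Position 𝒳) (x : ℕ → 𝒳) (y : ℕ → Bool)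

theorem run_succ (t : ℕ) : run s₀ x y (t + 1) = (run s₀ x y t).update (x t, y t) := by
  rw [run, List.ofFn_succ_eq_append (fun i => (x i, y i)), List.foldl_concat, run]

theorem mem_run {h : 𝒳 → Bool} (hs₀ : h ∈ s₀.1) {t : ℕ} (hcons : ∀ i < t, h (x i) = y i) :
    h ∈ (run s₀ x y t).1 := by
  induction t with
  | zero => exact hs₀
  | succ t ih =>
    rw [run_succ]
    exact mem_update (ih fun i hi => hcons i (Nat.lt_succ_of_lt hi)) (hcons t t.lt_succ_self)

theorem finite_mistakes_learner (hxy : RealizableSeq s₀.1 x y) :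
    (Mistakes (learner s₀) x y).Finite := by
  have hne : ∀ t, (run s₀ x y t).1.Nonempty := fun t =>
    let ⟨h, hs₀, hcons⟩ := hxy t
    ⟨h, mem_run s₀ x y hs₀ fun i hi => hcons i hi.le⟩
  have hmistake : ∀ t, (run s₀ x y t).predict (x t) ≠ y t →
      Child (run s₀ x y (t + 1)) (run s₀ x y t) := fun t hpredict =>
    run_succ s₀ x y t ▸ child_update_of_predict_ne (hne t) hpredict
  have hstep : ∀ t, run s₀ x y (t + 1) = run s₀ x y t ∨
      Child (run s₀ x y (t + 1)) (run s₀ x y t) := fun t => by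
    by_cases hpredict : (run s₀ x y t).predict (x t) = y t
    · exact .inl (by rw [run_succ, update, if_pos hpredict])
    · exact .inr (hmistake t hpredict)
  exact (wellFounded_child.finite_setOf_rel_apply_succ hstep).subset hmistake

end Position

end Littlestone

theorem onlineLearnable_of_not_hasInfiniteLittlestoneTree {ℋ : Set (𝒳 → Bool)}
    (hℋ : ¬ HasInfiniteLittlestoneTree ℋ) : OnlineLearnable ℋ :=
  let ⟨d⟩ := Littlestone.nonempty_winningStrategy_of_not_hasInfiniteLittlestoneTree hℋ
  ⟨Littlestone.Position.learner ⟨ℋ, d⟩, Littlestone.Position.finite_mistakes_learner ⟨ℋ, d⟩⟩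

theorem HasInfiniteLittlestoneTree.exists_adversary {ℋ : Set (𝒳 → Bool)}
    (hℋ : HasInfiniteLittlestoneTree ℋ) :
    ∃ A : List Bool → 𝒳, ∀ yhat : ℕ → Bool,
      RealizableSeq ℋ (fun t => A (List.ofFn fun i : Fin t => yhat i)) (fun t => !yhat t) := by
  obtain ⟨x, hx⟩ := hℋ
  refine ⟨fun u => x (u.map not), fun yhat T => ?_⟩
  obtain ⟨h, hh, hbranch⟩ := hx (fun t => !yhat t) T
  exact ⟨h, hh, fun t ht => by simpa [List.map_ofFn, Function.comp_def] using hbranch t ht⟩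

theorem exists_mistakes_eq_univ (S : List (𝒳 × Bool) → 𝒳 → Bool) (A : List Bool → 𝒳) :
    ∃ yhat : ℕ → Bool,
      Mistakes S (fun t => A (List.ofFn fun i : Fin t => yhat i)) (fun t => !yhat t) = .univ := by
  -- `z t = (x_t, yhat_t)`, defined by recursion on the history of the play
  obtain ⟨z, hz⟩ := exists_seq_forall_eq_apply_ofFn fun history : List (𝒳 × Bool) =>
    (A (history.map Prod.snd), S (history.map fun p => (p.1, !p.2)) (A (history.map Prod.snd)))
  refine ⟨fun t => (z t).2, Set.eq_univ_of_forall fun t => ?_⟩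
  have hpoint : ∀ t, (z t).1 = A (List.ofFn fun i : Fin t => (z i).2) := fun t => by
    rw [hz t, List.map_ofFn]; rfl
  have hpredict := congrArg Prod.snd (hz t)
  simp only [List.map_ofFn, Function.comp_def, ← hpoint] at hpredict
  simp only [Mistakes, Set.mem_ofPred_eq, ← hpoint, ← hpredict]
  exact (Bool.not_ne_self _).symm

/-- **Theorem 3.1 (dichotomy for online learning).** If `ℋ` has no infinite Littlestone tree, some
learner strategy makes finitely many mistakes against every adversary; if `ℋ` has an infinite
Littlestone tree, there is an adversary strategy (choosing `x_t` from the learner's previous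
predictions and answering `y_t = ¬yhat_t`, always legally, i.e. keeping the sequence realizable)
forcing every learner to make a mistake in every round.  In particular, `ℋ` is online learnable
iff it has no infinite Littlestone tree. -/
theorem online_learning_dichotomy (ℋ : Set (𝒳 → Bool)) :
    (¬ HasInfiniteLittlestoneTree ℋ →
        ∃ S : List (𝒳 × Bool) → 𝒳 → Bool,
          ∀ (x : ℕ → 𝒳) (y : ℕ → Bool), RealizableSeq ℋ x y → (Mistakes S x y).Finite) ∧
      (HasInfiniteLittlestoneTree ℋ →
        ∃ A : List Bool → 𝒳, ∀ yhat : ℕ → Bool,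
          RealizableSeq ℋ (fun t => A (List.ofFn fun i : Fin t => yhat i)) (fun t => !yhat t)) ∧
      (OnlineLearnable ℋ ↔ ¬ HasInfiniteLittlestoneTree ℋ) := by
  have learnable : ¬ HasInfiniteLittlestoneTree ℋ → OnlineLearnable ℋ :=
    onlineLearnable_of_not_hasInfiniteLittlestoneTree
  refine ⟨learnable, HasInfiniteLittlestoneTree.exists_adversary,
    fun ⟨S, hS⟩ htree => ?_, learnable⟩
  obtain ⟨A, hA⟩ := htree.exists_adversary
  obtain ⟨yhat, hmistakes⟩ := exists_mistakes_eq_univ S A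
  exact Set.infinite_univ (hmistakes ▸ hS _ _ (hA yhat))
end

section
/- Lemma 4.2 (exponential lower bound): Let 𝒳 be a Polish space and ℋ a concept class with |ℋ| > 2 whose members are universally measurable. For any learning algorithm ĥ_n, there exists a realizable distribution P on 𝒳 × {0,1} such that E[er_P(ĥ_n)] ≥ 2^{-n-2} for infinitely many n. -/
open scoped ENNReal

/-- A function is universally measurable if it is measurable with respect to (the completion of)
every Borel probability measure on its domain. -/
def UniversallyMeasurable {α β : Type*} [MeasurableSpace α] [MeasurableSpace β] (f : α → β) : Prop :=
  ∀ μ : MeasureTheory.Measure α, MeasureTheory.IsProbabilityMeasure μ →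
    MeasureTheory.NullMeasurable f μ

variable {𝒳 : Type*}

/-- The error of a classifier `h` under distribution `P` on `𝒳 × {0,1}`. -/
noncomputable def errP [MeasurableSpace 𝒳] (P : MeasureTheory.Measure (𝒳 × Bool))
    (h : 𝒳 → Bool) : ℝ≥0∞ :=
  P {p : 𝒳 × Bool | h p.1 ≠ p.2}

/-- `P` is realizable w.r.t. the concept class `ℋ`: `inf_{h ∈ ℋ} er_P(h) = 0`. -/
def Realizable [MeasurableSpace 𝒳] (ℋ : Set (𝒳 → Bool))
    (P : MeasureTheory.Measure (𝒳 × Bool)) : Prop :=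
  (⨅ h ∈ ℋ, errP P h) = 0

/-- A learning algorithm: a sequence of universally measurable maps
`H_n : (𝒳 × {0,1})^n × 𝒳 → {0,1}`. -/
structure LearningAlgorithm (𝒳 : Type*) [MeasurableSpace 𝒳] where
  H : ∀ n : ℕ, (Fin n → 𝒳 × Bool) → 𝒳 → Bool
  meas : ∀ n : ℕ, UniversallyMeasurable fun q : (Fin n → 𝒳 × Bool) × 𝒳 => H n q.1 q.2

/-- Expected error `E[er_P(ĥ_n)]` of the output of a learning algorithm on an i.i.d. sample of
size `n` from `P`, i.e. integration with respect to `P^{⊗n}`. -/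
noncomputable def expErr [MeasurableSpace 𝒳] (P : MeasureTheory.Measure (𝒳 × Bool))
    (A : LearningAlgorithm 𝒳) (n : ℕ) : ℝ≥0∞ :=
  MeasureTheory.lintegral (MeasureTheory.Measure.pi fun _ : Fin n => P)
    fun s => errP P (A.H n s)

/-- A rate function: `R : ℕ → [0,1]` with `R(n) → 0`. -/
def IsRate (R : ℕ → ℝ) : Prop :=
  (∀ n, R n ∈ Set.Icc (0 : ℝ) 1) ∧ Filter.Tendsto R Filter.atTop (nhds 0)

/-- `ℋ` is learnable at rate `R`. -/
def LearnableAtRate [MeasurableSpace 𝒳] (ℋ : Set (𝒳 → Bool)) (R : ℕ → ℝ) : Prop :=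
  ∃ A : LearningAlgorithm 𝒳,
    ∀ P : MeasureTheory.Measure (𝒳 × Bool),
      MeasureTheory.IsProbabilityMeasure P → Realizable ℋ P →
        ∃ C > (0 : ℝ), ∃ c > (0 : ℝ), ∀ n : ℕ,
          expErr P A n ≤ ENNReal.ofReal (C * R ⌈c * (n : ℝ)⌉₊)

/-- `ℋ` is not learnable at rate faster than `R`. -/
def NotLearnableFasterThan [MeasurableSpace 𝒳] (ℋ : Set (𝒳 → Bool)) (R : ℕ → ℝ) : Prop :=
  ∀ A : LearningAlgorithm 𝒳,
    ∃ P : MeasureTheory.Measure (𝒳 × Bool),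
      MeasureTheory.IsProbabilityMeasure P ∧ Realizable ℋ P ∧
        ∃ C > (0 : ℝ), ∃ c > (0 : ℝ),
          {n : ℕ | ENNReal.ofReal (C * R ⌈c * (n : ℝ)⌉₊) ≤ expErr P A n}.Infinite

/-- `ℋ` is learnable with optimal rate `R`. -/
def LearnableWithOptimalRate [MeasurableSpace 𝒳] (ℋ : Set (𝒳 → Bool)) (R : ℕ → ℝ) : Prop :=
  LearnableAtRate ℋ R ∧ NotLearnableFasterThan ℋ R

/-- `ℋ` requires arbitrarily slow rates. -/
def RequiresArbitrarilySlowRates [MeasurableSpace 𝒳] (ℋ : Set (𝒳 → Bool)) : Prop :=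
  ∀ R : ℕ → ℝ, IsRate R → NotLearnableFasterThan ℋ R

/-- Witness that `ℋ` is a measurable class: it is parameterized by a Polish space `Θ` via a
Borel measurable map `𝗁 : Θ × 𝒳 → {0,1}`. -/
structure MeasurableClassWitness (𝒳 : Type*) [MeasurableSpace 𝒳] (ℋ : Set (𝒳 → Bool)) where
  Θ : Type
  [tΘ : TopologicalSpace Θ]
  [mΘ : MeasurableSpace Θ]
  [polish : PolishSpace Θ]
  [borel : BorelSpace Θ]
  f : Θ → 𝒳 → Bool
  meas : Measurable (Function.uncurry f)
  range_eq : ℋ = Set.range f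

/-- `ℋ` is a measurable class (image admissible Suslin). -/
def MeasurableClass (𝒳 : Type*) [MeasurableSpace 𝒳] (ℋ : Set (𝒳 → Bool)) : Prop :=
  Nonempty (MeasurableClassWitness 𝒳 ℋ)

/-- `ℋ` has an infinite VCL tree: the node at depth `k` along a branch is a `(k+1)`-tuple of
points, edges out of it are labelled by `{0,1}^{k+1}`, and every finite branch is consistent
with some concept in `ℋ`. -/
def HasInfiniteVCLTree (ℋ : Set (𝒳 → Bool)) : Prop :=
  ∃ x : ∀ k : ℕ, (∀ j : Fin k, Fin (j.val + 1) → Bool) → Fin (k + 1) → 𝒳,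
    ∀ (y : ∀ k : ℕ, Fin (k + 1) → Bool) (n : ℕ),
      ∃ h ∈ ℋ, ∀ k ≤ n, ∀ i : Fin (k + 1),
        h (x k (fun j => y j.val) i) = y k i

/-!
Find two points `x₀, x₁` and a label `y₀` such that both labels at `x₁` are realized by concepts
labelling `x₀` by `y₀`; three distinct Boolean functions always give such a configuration. Feed the
algorithm the constant sample `(x₀, y₀), …, (x₀, y₀)` and let `y₁` be a label it gets wrong at `x₁`
for infinitely many `n`. Under the realizable distribution putting mass `1/2` on each of
`(x₀, y₀)` and `(x₁, y₁)`, that sample has probability `2⁻ⁿ` and the resulting classifier errs with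
probability at least `1/2`, so the expected error is at least `2⁻ⁿ⁻¹` for infinitely many `n`.
-/

open MeasureTheory Measure Set

lemma exists_concepts_agree_and_differ {α : Type*} {ℋ : Set (α → Bool)} (hcard : 2 < ℋ.encard) :
    ∃ f ∈ ℋ, ∃ g ∈ ℋ, ∃ x₀ x₁, f x₀ = g x₀ ∧ f x₁ ≠ g x₁ := by
  obtain ⟨a, b, ha, hb, hab⟩ := one_lt_encard_iff.1 ((by norm_num : (1 : ℕ∞) < 2).trans hcard)
  obtain ⟨x₁, hx₁⟩ := Function.ne_iff.1 hab
  by_cases hagree : ∃ x, a x = b x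
  · obtain ⟨x₀, hx₀⟩ := hagree
    exact ⟨a, ha, b, hb, x₀, x₁, hx₀, hx₁⟩
  simp only [not_exists] at hagree
  obtain ⟨c, hc, hcab⟩ := not_subset.1 fun hsub =>
    ((encard_mono hsub).trans_eq (encard_pair hab)).not_gt hcard
  obtain ⟨hca, hcb⟩ : c ≠ a ∧ c ≠ b := by simpa [not_or] using hcab
  obtain ⟨x₀, hx₀⟩ := Function.ne_iff.1 hcb
  obtain ⟨x₁', hx₁'⟩ := Function.ne_iff.1 hca
  -- `b` is the pointwise negation of `a`, so disagreeing with `b` means agreeing with `a`.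
  have hca₀ : c x₀ = a x₀ := Bool.ne_not.1 (Bool.eq_not.2 (Ne.symm (hagree x₀)) ▸ hx₀)
  exact ⟨c, hc, a, ha, x₀, x₁', hca₀, hx₁'⟩

lemma exists_concepts_realizing_both_labels {α : Type*} {ℋ : Set (α → Bool)}
    (hcard : 2 < ℋ.encard) : ∃ x₀ x₁ y₀, ∀ y₁ : Bool, ∃ h ∈ ℋ, h x₀ = y₀ ∧ h x₁ = y₁ := by
  obtain ⟨f, hf, g, hg, x₀, x₁, hx₀, hx₁⟩ := exists_concepts_agree_and_differ hcard
  refine ⟨x₀, x₁, f x₀, fun y₁ => ?_⟩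
  by_cases hfy : f x₁ = y₁
  · exact ⟨f, hf, rfl, hfy⟩
  · exact ⟨g, hg, hx₀.symm, (Bool.eq_not.2 hx₁.symm).trans (Bool.eq_not.2 (Ne.symm hfy)).symm⟩

noncomputable def twoPointMeasure {α : Type*} [MeasurableSpace α] (z₀ z₁ : α) : Measure α :=
  (2⁻¹ : ℝ≥0∞) • dirac z₀ + (2⁻¹ : ℝ≥0∞) • dirac z₁

section TwoPointMeasure

variable {α : Type*} [MeasurableSpace α] {z₀ z₁ : α} {s : Set α}

lemma twoPointMeasure_apply (z₀ z₁ : α) (s : Set α) :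
    twoPointMeasure z₀ z₁ s = 2⁻¹ * dirac z₀ s + 2⁻¹ * dirac z₁ s := by
  simp [twoPointMeasure]

instance : IsProbabilityMeasure (twoPointMeasure z₀ z₁) :=
  ⟨by simp [twoPointMeasure_apply, ENNReal.inv_two_add_inv_two]⟩

lemma inv_two_le_twoPointMeasure_apply_left (h : z₀ ∈ s) : 2⁻¹ ≤ twoPointMeasure z₀ z₁ s := by
  simp [twoPointMeasure_apply, dirac_apply_of_mem h]

lemma inv_two_le_twoPointMeasure_apply_right (h : z₁ ∈ s) : 2⁻¹ ≤ twoPointMeasure z₀ z₁ s := by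
  simp [twoPointMeasure_apply, dirac_apply_of_mem h]

lemma twoPointMeasure_apply_eq_zero [MeasurableSingletonClass α] (h₀ : z₀ ∉ s) (h₁ : z₁ ∉ s) :
    twoPointMeasure z₀ z₁ s = 0 := by
  simp [twoPointMeasure_apply, h₀, h₁]

end TwoPointMeasure

section Learning

variable [MeasurableSpace 𝒳]

lemma realizable_of_errP_eq_zero {ℋ : Set (𝒳 → Bool)} {P : Measure (𝒳 × Bool)} {h : 𝒳 → Bool}
    (hh : h ∈ ℋ) (herr : errP P h = 0) : Realizable ℋ P :=
  nonpos_iff_eq_zero.1 (herr ▸ iInf₂_le h hh)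

lemma errP_twoPointMeasure_eq_zero [MeasurableSingletonClass 𝒳] {x₀ x₁ : 𝒳} {y₀ y₁ : Bool}
    {h : 𝒳 → Bool} (h₀ : h x₀ = y₀) (h₁ : h x₁ = y₁) :
    errP (twoPointMeasure (x₀, y₀) (x₁, y₁)) h = 0 :=
  twoPointMeasure_apply_eq_zero (by simpa using h₀) (by simpa using h₁)

lemma inv_two_le_errP_twoPointMeasure (z₀ : 𝒳 × Bool) {x₁ : 𝒳} {y₁ : Bool} {h : 𝒳 → Bool}
    (hh : h x₁ ≠ y₁) : 2⁻¹ ≤ errP (twoPointMeasure z₀ (x₁, y₁)) h :=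
  inv_two_le_twoPointMeasure_apply_right hh

lemma measure_singleton_pow_mul_errP_le_expErr [MeasurableSingletonClass 𝒳]
    (P : Measure (𝒳 × Bool)) [SigmaFinite P] (A : LearningAlgorithm 𝒳) (n : ℕ)
    (z : 𝒳 × Bool) : P {z} ^ n * errP P (A.H n fun _ => z) ≤ expErr P A n := by
  have hpi : Measure.pi (fun _ : Fin n => P) {fun _ => z} = P {z} ^ n := by
    rw [← univ_pi_singleton, pi_pi, Finset.prod_const, Finset.card_univ, Fintype.card_fin]
  calc P {z} ^ n * errP P (A.H n fun _ => z)
      = ∫⁻ s in {fun _ => z}, errP P (A.H n s) ∂Measure.pi fun _ => P := by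
        rw [lintegral_singleton, hpi, mul_comm]
    _ ≤ expErr P A n := setLIntegral_le_lintegral _ _

end Learning

lemma ofReal_two_rpow_neg_sub_two_le (n : ℕ) :
    ENNReal.ofReal ((2 : ℝ) ^ (-(n : ℝ) - 2)) ≤ 2⁻¹ ^ n * 2⁻¹ := by
  have hreal : (2 : ℝ) ^ (-(n : ℝ) - 2) ≤ 2⁻¹ ^ (n + 1) := by
    rw [inv_pow, ← Real.rpow_natCast, ← Real.rpow_neg zero_le_two]
    exact Real.rpow_le_rpow_of_exponent_le one_le_two (by push_cast; linarith)
  calc ENNReal.ofReal ((2 : ℝ) ^ (-(n : ℝ) - 2)) ≤ ENNReal.ofReal (2⁻¹ ^ (n + 1)) :=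
        ENNReal.ofReal_le_ofReal hreal
    _ = 2⁻¹ ^ n * 2⁻¹ := by
        rw [ENNReal.ofReal_pow (by norm_num), ENNReal.ofReal_inv_of_pos two_pos, pow_succ]
        norm_num

theorem exponential_lower_bound_general
    (𝒳 : Type*) [TopologicalSpace 𝒳] [PolishSpace 𝒳] [MeasurableSpace 𝒳] [BorelSpace 𝒳]
    (ℋ : Set (𝒳 → Bool))
    (hcard : 2 < ℋ.encard) (A : LearningAlgorithm 𝒳) :
    ∃ P : MeasureTheory.Measure (𝒳 × Bool),
      MeasureTheory.IsProbabilityMeasure P ∧ Realizable ℋ P ∧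
        {n : ℕ | ENNReal.ofReal ((2 : ℝ) ^ (-(n : ℝ) - 2)) ≤ expErr P A n}.Infinite := by
  obtain ⟨x₀, x₁, y₀, hℋ⟩ := exists_concepts_realizing_both_labels hcard
  set z₀ : 𝒳 × Bool := (x₀, y₀)
  obtain ⟨y₁, hy₁⟩ := Finite.exists_infinite_fiber fun n => !A.H n (fun _ => z₀) x₁
  obtain ⟨h, hh, h₀, h₁⟩ := hℋ y₁
  set P := twoPointMeasure z₀ (x₁, y₁)
  refine ⟨P, inferInstance, realizable_of_errP_eq_zero hh (errP_twoPointMeasure_eq_zero h₀ h₁),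
    (infinite_coe_iff.1 hy₁).mono fun n hn => ?_⟩
  have hn : (!A.H n (fun _ => z₀) x₁) = y₁ := hn
  have herr : A.H n (fun _ => z₀) x₁ ≠ y₁ := (Bool.eq_not.1 hn.symm).symm
  calc ENNReal.ofReal ((2 : ℝ) ^ (-(n : ℝ) - 2)) ≤ 2⁻¹ ^ n * 2⁻¹ :=
        ofReal_two_rpow_neg_sub_two_le n
    _ ≤ P {z₀} ^ n * errP P (A.H n fun _ => z₀) := by
        gcongr
        exacts [inv_two_le_twoPointMeasure_apply_left rfl, inv_two_le_errP_twoPointMeasure z₀ herr]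
    _ ≤ expErr P A n := measure_singleton_pow_mul_errP_le_expErr P A n z₀

/-- **Lemma 4.2 (exponential lower bound).** If `|ℋ| > 2` (members universally measurable), then
for any learning algorithm there is a realizable distribution `P` with
`E[er_P(ĥ_n)] ≥ 2^{-n-2}` for infinitely many `n`. In particular `ℋ` is not learnable at rate
faster than `e^{-n}`. -/
theorem exponential_lower_bound
    (𝒳 : Type*) [TopologicalSpace 𝒳] [PolishSpace 𝒳] [MeasurableSpace 𝒳] [BorelSpace 𝒳]
    (ℋ : Set (𝒳 → Bool)) (hum : ∀ h ∈ ℋ, UniversallyMeasurable h)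
    (hcard : 2 < ℋ.encard) (A : LearningAlgorithm 𝒳) :
    ∃ P : MeasureTheory.Measure (𝒳 × Bool),
      MeasureTheory.IsProbabilityMeasure P ∧ Realizable ℋ P ∧
        {n : ℕ | ENNReal.ofReal ((2 : ℝ) ^ (-(n : ℝ) - 2)) ≤ expErr P A n}.Infinite :=
  exponential_lower_bound_general 𝒳 ℋ hcard A
end

section
/- Theorem 4.6 (linear lower bound): Let 𝒳 be a Polish space and ℋ a concept class whose members are universally measurable. If ℋ has an infinite Littlestone tree, then for any learning algorithm ĥ_n there exists a realizable distribution P on 𝒳 × {0,1} such that E[er_P(ĥ_n)] ≥ 1/(32·n) for infinitely many n. In particular, ℋ is not learnable at rate faster than 1/n. -/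
open scoped ENNReal

variable {𝒳 : Type*}

/-!
Along a branch `y` of the Littlestone tree put mass `2^{-(k+1)}` on the node of depth `k`,
labelled `y k`. This distribution is realizable: a concept consistent with the first `n + 1`
levels errs with probability at most `2^{-(n+1)}`. The branch is built against the learner,
level by level. A sample of size `2^k` falls into the first `k + 1` levels with probability at
least `1/2` (Bernoulli's inequality), and on such samples the prediction at the node of depth
`k + 1` depends only on `y 0, …, y k`; so `y (k + 1)` can be chosen to be the label predicted
there with probability at most one half. The learner then misclassifies that node, of mass
`2^{-(k+2)}`, with probability at least `1/4`, giving `E[er(ĥ_{2^k})] ≥ 2^{-(k+4)} ≥ 1/(32·2^k)`.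
-/

open MeasureTheory

theorem ENNReal.tsum_fin_pi_prod {κ : Type*} :
    ∀ {n : ℕ} (f : Fin n → κ → ℝ≥0∞), ∑' u : Fin n → κ, ∏ i, f i (u i) = ∏ i, ∑' j, f i j
  | 0, f => by
    rw [tsum_eq_single default fun u hu => (hu (Subsingleton.elim _ _)).elim]
    simp
  | n + 1, f => by
    rw [← (Fin.consEquiv fun _ => κ).tsum_eq, ENNReal.tsum_prod', Fin.prod_univ_succ,
      ← ENNReal.tsum_fin_pi_prod, ← ENNReal.tsum_mul_right]
    refine tsum_congr fun a => ?_
    rw [← ENNReal.tsum_mul_left]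
    refine tsum_congr fun u => ?_
    simp [Fin.consEquiv, Fin.prod_univ_succ]

theorem ENNReal.one_le_pow_add_mul_of_add_eq_one {a b : ℝ≥0∞} (hab : a + b = 1) :
    ∀ n : ℕ, 1 ≤ a ^ n + n * b
  | 0 => by simp
  | n + 1 => by
    have hpow : a ^ n ≤ a ^ (n + 1) + b :=
      calc a ^ n = a ^ (n + 1) + a ^ n * b := by rw [pow_succ, ← mul_add, hab, mul_one]
        _ ≤ a ^ (n + 1) + b := by
          gcongr
          exact mul_le_of_le_one_left' (pow_le_one' (hab ▸ le_self_add) n)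
    calc 1 ≤ a ^ n + n * b := ENNReal.one_le_pow_add_mul_of_add_eq_one hab n
      _ ≤ a ^ (n + 1) + b + n * b := by gcongr
      _ = a ^ (n + 1) + (n + 1 : ℕ) * b := by push_cast; ring

theorem ENNReal.ofReal_one_div_thirtyTwo_mul_two_pow_le (k : ℕ) :
    ENNReal.ofReal (1 / (32 * ((2 ^ k : ℕ) : ℝ))) ≤ 2⁻¹ ^ (k + 4) := by
  rw [← ENNReal.ofReal_ofNat 2, ← ENNReal.ofReal_inv_of_pos two_pos,
    ← ENNReal.ofReal_pow (by norm_num)]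
  refine ENNReal.ofReal_le_ofReal ?_
  rw [inv_pow, pow_add, one_div]
  refine inv_anti₀ (by positivity) ?_
  push_cast
  nlinarith [pow_pos (two_pos (α := ℝ)) k]

namespace MeasureTheory.Measure

variable {κ α : Type*} [Countable κ] [MeasurableSpace α] [MeasurableSingletonClass α]

theorem sum_smul_dirac_apply (c : κ → ℝ≥0∞) (a : κ → α) (s : Set α) :
    sum (fun k => c k • dirac (a k)) s = ∑' k, c k * s.indicator 1 (a k) := by
  simp only [sum_apply_of_countable, smul_apply, smul_eq_mul, dirac_apply]

theorem pi_sum_smul_dirac {n : ℕ} (c : κ → ℝ≥0∞) (a : κ → α)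
    [SigmaFinite (sum fun k => c k • dirac (a k))] :
    Measure.pi (fun _ : Fin n => sum fun k => c k • dirac (a k)) =
      sum fun u : Fin n → κ => (∏ i, c (u i)) • dirac fun i => a (u i) := by
  refine pi_eq (μ := fun _ : Fin n => sum fun k => c k • dirac (a k)) fun s _ => ?_
  simp_rw [sum_smul_dirac_apply, ← Finset.coe_univ, Set.indicator_pi_one_apply,
    ← Finset.prod_mul_distrib]
  exact ENNReal.tsum_fin_pi_prod fun i k => c k * (s i).indicator 1 (a k)

end MeasureTheory.Measure

def causalSeq {α : Type*} (c : ℕ → (ℕ → α) → α) (a : α) : ℕ → α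
  | 0 => a
  | n + 1 => c n fun i => if _ : i ≤ n then causalSeq c a i else a

theorem causalSeq_succ {α : Type*} {c : ℕ → (ℕ → α) → α} (a : α)
    (hc : ∀ k y y', (∀ i ≤ k, y i = y' i) → c k y = c k y') (n : ℕ) :
    causalSeq c a (n + 1) = c n (causalSeq c a) := by
  rw [causalSeq]
  exact hc n _ _ fun i hi => dif_pos hi

noncomputable section

namespace LittlestoneTree

def levelWeight (k : ℕ) : ℝ≥0∞ := 2⁻¹ ^ (k + 1)

theorem tsum_levelWeight_add (m : ℕ) : ∑' k, levelWeight (k + m) = 2⁻¹ ^ m := by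
  simp_rw [levelWeight, add_right_comm _ m, pow_add _ _ m, ENNReal.tsum_mul_right,
    ENNReal.tsum_geometric_add_one, ENNReal.one_sub_inv_two, inv_inv,
    ENNReal.inv_mul_cancel two_ne_zero ENNReal.ofNat_ne_top, one_mul]

theorem tsum_levelWeight : ∑' k, levelWeight k = 1 := by
  simpa using tsum_levelWeight_add 0

theorem sum_levelWeight_add_pow (m : ℕ) : ∑ j : Fin m, levelWeight j + 2⁻¹ ^ m = 1 := by
  rw [Fin.sum_univ_eq_sum_range levelWeight, ← tsum_levelWeight_add, ← tsum_levelWeight]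
  exact ENNReal.summable.sum_add_tsum_nat_add'

theorem half_le_sum_levelWeight_pow (k : ℕ) :
    2⁻¹ ≤ (∑ j : Fin (k + 1), levelWeight j) ^ 2 ^ k := by
  have h := ENNReal.one_le_pow_add_mul_of_add_eq_one (sum_levelWeight_add_pow (k + 1)) (2 ^ k)
  rwa [Nat.cast_pow, Nat.cast_ofNat, pow_succ, ← mul_assoc, ← mul_pow,
    ENNReal.mul_inv_cancel two_ne_zero ENNReal.ofNat_ne_top, one_pow, one_mul,
    ← tsub_le_iff_right, ENNReal.one_sub_inv_two] at h

variable (x : List Bool → 𝒳)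

def branchPoint (y : ℕ → Bool) (k : ℕ) : 𝒳 := x (List.ofFn fun i : Fin k => y i)

def branchAtom (y : ℕ → Bool) (k : ℕ) : 𝒳 × Bool := (branchPoint x y k, y k)

theorem branchPoint_congr {y y' : ℕ → Bool} {k : ℕ} (h : ∀ i < k, y i = y' i) :
    branchPoint x y k = branchPoint x y' k := by
  simp only [branchPoint, fun i : Fin k => h i i.2]

theorem branchAtom_congr {y y' : ℕ → Bool} {k : ℕ} (h : ∀ i ≤ k, y i = y' i) :
    branchAtom x y k = branchAtom x y' k := by
  rw [branchAtom, branchAtom, branchPoint_congr x fun i hi => h i hi.le, h k le_rfl]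

variable [MeasurableSpace 𝒳]

def branchMeasure (y : ℕ → Bool) : Measure (𝒳 × Bool) :=
  Measure.sum fun k => levelWeight k • Measure.dirac (branchAtom x y k)

instance (y : ℕ → Bool) : IsProbabilityMeasure (branchMeasure x y) := by
  constructor
  simp [branchMeasure, Measure.sum_apply _ MeasurableSet.univ, tsum_levelWeight]

variable (A : LearningAlgorithm 𝒳)

def predictionMass (y : ℕ → Bool) (n k : ℕ) (b : Bool) : ℝ≥0∞ :=
  ∑ v : Fin n → Fin (k + 1) with
    A.H n (fun i => branchAtom x y (v i)) (branchPoint x y (k + 1)) = b, ∏ i, levelWeight (v i)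

theorem predictionMass_true_add_false (y : ℕ → Bool) (n k : ℕ) :
    predictionMass x A y n k true + predictionMass x A y n k false =
      (∑ j : Fin (k + 1), levelWeight j) ^ n := by
  simp_rw [predictionMass, ← Bool.not_eq_true, Finset.sum_filter_add_sum_filter_not,
    Fintype.sum_pow]

theorem predictionMass_congr {y y' : ℕ → Bool} {n k : ℕ} (h : ∀ i ≤ k, y i = y' i) (b : Bool) :
    predictionMass x A y n k b = predictionMass x A y' n k b := by
  have hatom (v : Fin n → Fin (k + 1)) :
      (fun i => branchAtom x y (v i)) = fun i => branchAtom x y' (v i) :=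
    funext fun i => branchAtom_congr x fun j hj => h j (hj.trans (Nat.lt_succ_iff.mp (v i).2))
  simp only [predictionMass, hatom, branchPoint_congr x fun i hi => h i (Nat.lt_succ_iff.mp hi)]

def adversarialLabel (n k : ℕ) (y : ℕ → Bool) : Bool :=
  decide (predictionMass x A y n k true ≤ predictionMass x A y n k false)

theorem sum_levelWeight_pow_le_two_mul_predictionMass (y : ℕ → Bool) (n k : ℕ) :
    (∑ j : Fin (k + 1), levelWeight j) ^ n ≤
      2 * predictionMass x A y n k (!adversarialLabel x A n k y) := by
  rw [← predictionMass_true_add_false x A y n k, adversarialLabel, two_mul]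
  by_cases hle : predictionMass x A y n k true ≤ predictionMass x A y n k false
  · simpa [hle] using add_le_add_left hle _
  · simpa [hle] using add_le_add_right (le_of_not_ge hle) _

def adversarialBranch : ℕ → Bool :=
  causalSeq (fun k => adversarialLabel x A (2 ^ k) k) false

theorem adversarialBranch_succ (k : ℕ) :
    adversarialBranch x A (k + 1) = adversarialLabel x A (2 ^ k) k (adversarialBranch x A) :=
  causalSeq_succ false
    (fun k _ _ h => by simp only [adversarialLabel, predictionMass_congr x A h]) k

variable [MeasurableSingletonClass 𝒳] {x}

theorem levelWeight_le_errP {y : ℕ → Bool} {h : 𝒳 → Bool} {k : ℕ}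
    (hk : h (branchPoint x y k) ≠ y k) : levelWeight k ≤ errP (branchMeasure x y) h := by
  rw [errP, branchMeasure, Measure.sum_smul_dirac_apply]
  refine le_trans ?_ (ENNReal.le_tsum k)
  rw [Set.indicator_of_mem (show branchAtom x y k ∈ {p : 𝒳 × Bool | h p.1 ≠ p.2} from hk),
    Pi.one_apply, mul_one]

theorem errP_branchMeasure_le {y : ℕ → Bool} {h : 𝒳 → Bool} {n : ℕ}
    (hh : ∀ k ≤ n, h (branchPoint x y k) = y k) :
    errP (branchMeasure x y) h ≤ 2⁻¹ ^ (n + 1) := by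
  rw [errP, branchMeasure, Measure.sum_smul_dirac_apply,
    ← ENNReal.summable.sum_add_tsum_nat_add' (k := n + 1), ← tsum_levelWeight_add]
  have hagree : ∀ k ∈ Finset.range (n + 1),
      levelWeight k * {p : 𝒳 × Bool | h p.1 ≠ p.2}.indicator 1 (branchAtom x y k) = 0 := by
    intro k hk
    rw [Set.indicator_of_notMem (not_not_intro (hh k (Finset.mem_range_succ_iff.mp hk))),
      mul_zero]
  rw [Finset.sum_eq_zero hagree, zero_add]
  exact ENNReal.tsum_le_tsum fun k => mul_le_of_le_one_right' (Set.indicator_le_self' (by simp) _)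

theorem branchMeasure_realizable {ℋ : Set (𝒳 → Bool)}
    (hx : ∀ (y : ℕ → Bool) (n : ℕ), ∃ h ∈ ℋ, ∀ k ≤ n, h (branchPoint x y k) = y k)
    (y : ℕ → Bool) : Realizable ℋ (branchMeasure x y) := by
  have hlim : Filter.Tendsto (fun n : ℕ => (2⁻¹ : ℝ≥0∞) ^ (n + 1)) Filter.atTop (nhds 0) :=
    (ENNReal.tendsto_pow_atTop_nhds_zero_of_lt_one (ENNReal.inv_lt_one.mpr ENNReal.one_lt_two)).comp
      (Filter.tendsto_add_atTop_nat 1)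
  refine nonpos_iff_eq_zero.mp (ge_of_tendsto' hlim fun n => ?_)
  obtain ⟨h, hmem, hagree⟩ := hx y n
  exact (iInf₂_le h hmem).trans (errP_branchMeasure_le hagree)

theorem expErr_branchMeasure (y : ℕ → Bool) (n : ℕ) :
    expErr (branchMeasure x y) A n = ∑' u : Fin n → ℕ, (∏ i, levelWeight (u i)) *
      errP (branchMeasure x y) (A.H n fun i => branchAtom x y (u i)) := by
  have : IsProbabilityMeasure (branchMeasure x y) := inferInstance
  unfold branchMeasure at this ⊢
  rw [expErr, Measure.pi_sum_smul_dirac, lintegral_sum_measure]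
  simp only [lintegral_smul_measure, lintegral_dirac, smul_eq_mul]

variable (x)

theorem levelWeight_mul_predictionMass_le_expErr (y : ℕ → Bool) (n k : ℕ) :
    levelWeight (k + 1) * predictionMass x A y n k (!y (k + 1)) ≤
      expErr (branchMeasure x y) A n := by
  let g (u : Fin n → ℕ) : ℝ≥0∞ :=
    (∏ i, levelWeight (u i)) * errP (branchMeasure x y) (A.H n fun i => branchAtom x y (u i))
  have hval : Function.Injective fun (v : Fin n → Fin (k + 1)) i => (v i : ℕ) :=
    fun v v' hv => funext fun i => Fin.val_injective (congrFun hv i)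
  calc levelWeight (k + 1) * predictionMass x A y n k (!y (k + 1))
      = ∑ v : Fin n → Fin (k + 1) with
          A.H n (fun i => branchAtom x y (v i)) (branchPoint x y (k + 1)) = !y (k + 1),
          (∏ i, levelWeight (v i)) * levelWeight (k + 1) := by
        rw [predictionMass, Finset.mul_sum]
        simp_rw [mul_comm]
    _ ≤ ∑ v : Fin n → Fin (k + 1) with
          A.H n (fun i => branchAtom x y (v i)) (branchPoint x y (k + 1)) = !y (k + 1),
          g fun i => v i := by
        refine Finset.sum_le_sum fun v hv => mul_le_mul_right (levelWeight_le_errP ?_) _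
        rw [(Finset.mem_filter.mp hv).2]
        exact Bool.not_ne_self _
    _ ≤ ∑ v : Fin n → Fin (k + 1), g fun i => v i :=
        Finset.sum_le_sum_of_subset (Finset.filter_subset _ _)
    _ ≤ ∑' u, g u := by
        rw [← tsum_fintype (L := SummationFilter.unconditional _)]
        exact ENNReal.tsum_comp_le_tsum_of_injective hval g
    _ = expErr (branchMeasure x y) A n := (expErr_branchMeasure A y n).symm

theorem inv_two_pow_le_expErr_adversarialBranch (k : ℕ) :
    2⁻¹ ^ (k + 4) ≤ expErr (branchMeasure x (adversarialBranch x A)) A (2 ^ k) := by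
  have hmass : 2⁻¹ * 2⁻¹ ≤
      predictionMass x A (adversarialBranch x A) (2 ^ k) k (!adversarialBranch x A (k + 1)) := by
    rw [adversarialBranch_succ]
    calc (2⁻¹ : ℝ≥0∞) * 2⁻¹ ≤ 2⁻¹ * (∑ j : Fin (k + 1), levelWeight j) ^ 2 ^ k :=
          mul_le_mul_right (half_le_sum_levelWeight_pow k) _
      _ ≤ 2⁻¹ * (2 * predictionMass x A _ (2 ^ k) k (!adversarialLabel x A (2 ^ k) k _)) :=
          mul_le_mul_right (sum_levelWeight_pow_le_two_mul_predictionMass x A _ _ k) _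
      _ = _ := ENNReal.inv_mul_cancel_left two_ne_zero ENNReal.ofNat_ne_top
  calc (2⁻¹ : ℝ≥0∞) ^ (k + 4) = levelWeight (k + 1) * (2⁻¹ * 2⁻¹) := by rw [levelWeight]; ring
    _ ≤ _ := mul_le_mul_right hmass _
    _ ≤ _ := levelWeight_mul_predictionMass_le_expErr x A _ _ k

end LittlestoneTree

theorem HasInfiniteLittlestoneTree.exists_hard_realizable_distribution [MeasurableSpace 𝒳]
    [MeasurableSingletonClass 𝒳] {ℋ : Set (𝒳 → Bool)} (htree : HasInfiniteLittlestoneTree ℋ)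
    (A : LearningAlgorithm 𝒳) :
    ∃ P : Measure (𝒳 × Bool), IsProbabilityMeasure P ∧ Realizable ℋ P ∧
      {n : ℕ | ENNReal.ofReal (1 / (32 * (n : ℝ))) ≤ expErr P A n}.Infinite := by
  obtain ⟨x, hx⟩ := htree
  exact ⟨_, inferInstance, LittlestoneTree.branchMeasure_realizable hx _,
    Set.infinite_of_injective_forall_mem (Nat.pow_right_injective le_rfl) fun k =>
      (ENNReal.ofReal_one_div_thirtyTwo_mul_two_pow_le k).trans
        (LittlestoneTree.inv_two_pow_le_expErr_adversarialBranch x A k)⟩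

end

theorem notLearnableFasterThan_one_div [MeasurableSpace 𝒳] {ℋ : Set (𝒳 → Bool)}
    (h : ∀ A : LearningAlgorithm 𝒳, ∃ P : Measure (𝒳 × Bool), IsProbabilityMeasure P ∧
      Realizable ℋ P ∧ {n : ℕ | ENNReal.ofReal (1 / (32 * (n : ℝ))) ≤ expErr P A n}.Infinite) :
    NotLearnableFasterThan ℋ (fun n => 1 / max (n : ℝ) 1) := by
  intro A
  obtain ⟨P, hP, hreal, hinf⟩ := h A
  refine ⟨P, hP, hreal, 1 / 32, by norm_num, 1, one_pos,
    (hinf.sdiff (Set.finite_singleton 0)).mono ?_⟩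
  rintro n ⟨hn, hn0⟩
  have hn1 : (1 : ℝ) ≤ n := Nat.one_le_cast.mpr (Nat.one_le_iff_ne_zero.mpr hn0)
  have hrate : 1 / 32 * (1 / max (⌈1 * (n : ℝ)⌉₊ : ℝ) 1) = 1 / (32 * (n : ℝ)) := by
    rw [one_mul, Nat.ceil_natCast, max_eq_left hn1, div_mul_div_comm, one_mul]
  show ENNReal.ofReal (1 / 32 * (1 / max (⌈1 * (n : ℝ)⌉₊ : ℝ) 1)) ≤ expErr P A n
  rwa [hrate]

theorem linear_lower_bound_general
    (𝒳 : Type*) [TopologicalSpace 𝒳] [PolishSpace 𝒳] [MeasurableSpace 𝒳] [BorelSpace 𝒳]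
    (ℋ : Set (𝒳 → Bool))
    (htree : HasInfiniteLittlestoneTree ℋ) :
    (∀ A : LearningAlgorithm 𝒳,
      ∃ P : MeasureTheory.Measure (𝒳 × Bool),
        MeasureTheory.IsProbabilityMeasure P ∧ Realizable ℋ P ∧
          {n : ℕ | ENNReal.ofReal (1 / (32 * (n : ℝ))) ≤ expErr P A n}.Infinite) ∧
    NotLearnableFasterThan ℋ (fun n => 1 / max (n : ℝ) 1) :=
  ⟨htree.exists_hard_realizable_distribution,
    notLearnableFasterThan_one_div htree.exists_hard_realizable_distribution⟩

/-- **Theorem 4.6 (linear lower bound).** If `ℋ` (members universally measurable) has an infinite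
Littlestone tree, then for any learning algorithm there exists a realizable distribution `P` with
`E[er_P(ĥ_n)] ≥ 1/(32 n)` for infinitely many `n`. In particular, `ℋ` is not learnable at rate
faster than `1/n`. -/
theorem linear_lower_bound
    (𝒳 : Type*) [TopologicalSpace 𝒳] [PolishSpace 𝒳] [MeasurableSpace 𝒳] [BorelSpace 𝒳]
    (ℋ : Set (𝒳 → Bool)) (hum : ∀ h ∈ ℋ, UniversallyMeasurable h)
    (htree : HasInfiniteLittlestoneTree ℋ) :
    (∀ A : LearningAlgorithm 𝒳,
      ∃ P : MeasureTheory.Measure (𝒳 × Bool),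
        MeasureTheory.IsProbabilityMeasure P ∧ Realizable ℋ P ∧
          {n : ℕ | ENNReal.ofReal (1 / (32 * (n : ℝ))) ≤ expErr P A n}.Infinite) ∧
    NotLearnableFasterThan ℋ (fun n => 1 / max (n : ℝ) 1) :=
  linear_lower_bound_general 𝒳 ℋ htree
end

section
/- Lemma 5.8: Let R : ℕ≥1 → [0,1] be any function with R(t) → 0 as t → ∞. Then there exist p_1, p_2, … ≥ 0 with ∑_{k≥1} p_k = 1, two strictly increasing sequences of positive integers (n_i)_{i≥1} and (k_i)_{i≥1}, and a constant C with 1/2 ≤ C ≤ 1, such that for all i > 1: (a) ∑_{k > k_i} p_k ≤ 1/n_i; (b) n_i · p_{k_i} ≤ k_i; (c) p_{k_i} = C · R(n_i). -/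
/-- **Lemma 5.8.** For any rate function `R : ℕ≥1 → [0,1]` with `R(t) → 0`, there exist
probabilities `p_1, p_2, … ≥ 0` summing to one, strictly increasing sequences of positive
integers `(n_i)_{i ≥ 1}`, `(k_i)_{i ≥ 1}` (indexed here from `0`, so `n 0 = n_1`), and a constant
`1/2 ≤ C ≤ 1` such that for all `i > 1` (i.e. all indices `≥ 1` in the `0`-based indexing):
(a) `∑_{k > k_i} p_k ≤ 1/n_i`; (b) `n_i p_{k_i} ≤ k_i`; (c) `p_{k_i} = C R(n_i)`. -/
theorem rate_probabilities_exist
    (R : ℕ → ℝ) (hR : ∀ t : ℕ, 1 ≤ t → R t ∈ Set.Icc (0 : ℝ) 1)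
    (hRlim : Filter.Tendsto R Filter.atTop (nhds 0)) :
    ∃ (p : ℕ → ℝ) (n k : ℕ → ℕ) (C : ℝ),
      (∀ j : ℕ, 0 ≤ p j) ∧ (∑' j : ℕ, p (j + 1)) = 1 ∧
      StrictMono n ∧ StrictMono k ∧
      (∀ i : ℕ, 0 < n i) ∧ (∀ i : ℕ, 0 < k i) ∧
      1 / 2 ≤ C ∧ C ≤ 1 ∧
      ∀ i : ℕ, 1 ≤ i →
        (∑' j : ℕ, p (k i + 1 + j)) ≤ 1 / (n i : ℝ) ∧
        (n i : ℝ) * p (k i) ≤ (k i : ℝ) ∧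
        p (k i) = C * R (n i) := by
  classical
  -- threshold function: for every c, beyond T c we have R t ≤ 1/(c+1)
  obtain ⟨T, hT⟩ : ∃ T : ℕ → ℕ, ∀ c : ℕ, ∀ t : ℕ, T c ≤ t → R t ≤ 1 / ((c : ℝ) + 1) := by
    have h : ∀ c : ℕ, ∃ N : ℕ, ∀ t : ℕ, N ≤ t → R t ≤ 1 / ((c : ℝ) + 1) := by
      intro c
      have hε : (0 : ℝ) < 1 / ((c : ℝ) + 1) := by positivity
      obtain ⟨N, hN⟩ := Metric.tendsto_atTop.mp hRlim _ hε
      refine ⟨N, fun t ht => le_of_lt ?_⟩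
      have := hN t ht
      rw [Real.dist_eq, sub_zero] at this
      exact (le_abs_self _).trans_lt this
    exact ⟨fun c => (h c).choose, fun c => (h c).choose_spec⟩
  -- the sequence n
  set n : ℕ → ℕ := fun i => Nat.rec 1 (fun i ni => max (ni + 1) (T (2 ^ (i + 2) * ni - 1))) i
    with hn
  have hn0 : n 0 = 1 := rfl
  have hnsucc : ∀ i, n (i + 1) = max (n i + 1) (T (2 ^ (i + 2) * n i - 1)) := fun i => rfl
  have hnmono : StrictMono n := by
    apply strictMono_nat_of_lt_succ
    intro i
    rw [hnsucc i]
    exact lt_of_lt_of_le (Nat.lt_succ_self _) (le_max_left _ _)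
  have hnpos : ∀ i, 0 < n i := fun i => lt_of_lt_of_le (by norm_num [hn0]) (hnmono.monotone (Nat.zero_le i))
  have hnR : ∀ i, (0 : ℝ) ≤ R (n i) ∧ R (n i) ≤ 1 := fun i => ⟨(hR _ (hnpos i)).1, (hR _ (hnpos i)).2⟩
  -- decay of R along n
  have hRn : ∀ i : ℕ, R (n (i + 1)) ≤ 1 / (2 ^ (i + 2) * (n i : ℝ)) := by
    intro i
    have h1 : T (2 ^ (i + 2) * n i - 1) ≤ n (i + 1) := by rw [hnsucc i]; exact le_max_right _ _
    have h2 : 1 ≤ 2 ^ (i + 2) * n i := Nat.mul_pos (pow_pos (by norm_num) _) (hnpos i)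
    have := hT _ _ h1
    have hc : ((2 ^ (i + 2) * n i - 1 : ℕ) : ℝ) + 1 = 2 ^ (i + 2) * (n i : ℝ) := by
      have : (2 ^ (i + 2) * n i - 1) + 1 = 2 ^ (i + 2) * n i := Nat.sub_add_cancel h2
      calc ((2 ^ (i + 2) * n i - 1 : ℕ) : ℝ) + 1 = (((2 ^ (i + 2) * n i - 1) + 1 : ℕ) : ℝ) := by
            push_cast; ring
        _ = 2 ^ (i + 2) * (n i : ℝ) := by rw [this]; push_cast; ring
    rwa [hc] at this
  -- the sequence q of point masses
  set q : ℕ → ℝ := fun m =>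
    Nat.rec (1 - ∑' i : ℕ, R (n (i + 1)) / 2) (fun m _ => R (n (m + 1)) / 2) m with hq
  have hq0 : q 0 = 1 - ∑' i : ℕ, R (n (i + 1)) / 2 := rfl
  have hqs : ∀ m, q (m + 1) = R (n (m + 1)) / 2 := fun m => rfl
  -- bounding q and summability
  have hbound : ∀ m : ℕ, R (n (m + 1)) / 2 ≤ (1 / 4 : ℝ) * (1 / 2) ^ m := by
    intro m
    have h1 := hRn m
    have hni : (1 : ℝ) ≤ (n m : ℝ) := by exact_mod_cast hnpos m
    have hpos : (0 : ℝ) < 2 ^ (m + 2) := by positivity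
    have h3 : 1 / (2 ^ (m + 2) * (n m : ℝ)) ≤ 1 / 2 ^ (m + 2) := by
      apply one_div_le_one_div_of_le hpos
      exact le_mul_of_one_le_right (le_of_lt hpos) hni
    have h4 : (1 / 2 ^ (m + 2) : ℝ) = (1 / 4) * (1 / 2) ^ m := by
      rw [div_pow, one_pow, pow_add]; norm_num
    have hR0 := (hnR (m + 1)).1
    nlinarith [h1.trans h3]
  have hgsum : Summable (fun m : ℕ => (1 / 4 : ℝ) * (1 / 2) ^ m) :=
    (summable_geometric_of_lt_one (by norm_num) (by norm_num)).mul_left _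
  have hqnn : ∀ m, (0 : ℝ) ≤ R (n (m + 1)) / 2 := fun m => by
    have := (hnR (m + 1)).1; linarith
  have sq : Summable (fun m : ℕ => R (n (m + 1)) / 2) :=
    Summable.of_nonneg_of_le hqnn hbound hgsum
  have hgt : (∑' m : ℕ, (1 / 4 : ℝ) * (1 / 2) ^ m) = 1 / 2 := by
    rw [tsum_mul_left, tsum_geometric_of_lt_one (by norm_num) (by norm_num)]
    norm_num
  have hS_le : (∑' i : ℕ, R (n (i + 1)) / 2) ≤ 1 / 2 := by
    rw [← hgt]; exact Summable.tsum_le_tsum hbound sq hgsum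
  have hS_nn : (0 : ℝ) ≤ ∑' i : ℕ, R (n (i + 1)) / 2 := tsum_nonneg hqnn
  have hq0nn : (0 : ℝ) ≤ q 0 := by rw [hq0]; linarith
  have hqnonneg : ∀ m, 0 ≤ q m := by
    intro m
    cases m with
    | zero => exact hq0nn
    | succ m => rw [hqs]; exact hqnn m
  have hqsum : Summable q := by
    apply (summable_nat_add_iff 1).mp
    have : (fun m : ℕ => q (m + 1)) = fun m : ℕ => R (n (m + 1)) / 2 := funext fun m => hqs m
    rw [this]; exact sq
  have hqtsum : (∑' m : ℕ, q m) = 1 := by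
    rw [Summable.tsum_eq_zero_add hqsum, hq0]
    have : (∑' m : ℕ, q (m + 1)) = ∑' m : ℕ, R (n (m + 1)) / 2 := tsum_congr fun m => hqs m
    rw [this]; ring
  -- the index sequence e and probability vector p
  set e : ℕ → ℕ := fun m => Nat.rec 1 (fun m _ => n (m + 1) + 1) m with he
  have he0 : e 0 = 1 := rfl
  have hes : ∀ m, e (m + 1) = n (m + 1) + 1 := fun m => rfl
  have hemono : StrictMono e := by
    apply strictMono_nat_of_lt_succ
    intro m
    cases m with
    | zero => rw [he0, hes 0]; have := hnpos (0 + 1); omega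
    | succ m =>
      rw [hes m, hes (m + 1)]
      have := hnmono (show m + 1 < m + 1 + 1 by omega)
      omega
  have heinj : Function.Injective e := hemono.injective
  have hepos : ∀ m, 1 ≤ e m := fun m => by
    have := hemono.monotone (Nat.zero_le m); rw [he0] at this; omega
  set p : ℕ → ℝ := Function.extend e q 0 with hp
  have hp_at : ∀ m, p (e m) = q m := by
    intro m
    rw [hp]
    exact heinj.extend_apply q _ m
  have hp_off : ∀ x, x ∉ Set.range e → p x = 0 := by
    intro x hx
    rw [hp, Function.extend_apply' (f := e) q (0 : ℕ → ℝ) x (fun h => hx h)]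
    rfl
  have hp_nonneg : ∀ j, 0 ≤ p j := by
    intro j
    by_cases hj : j ∈ Set.range e
    · obtain ⟨m, rfl⟩ := hj; rw [hp_at]; exact hqnonneg m
    · rw [hp_off j hj]
  have hpsum : Summable p := by
    rw [hp]; exact (summable_extend_zero heinj).mpr hqsum
  have hp0 : p 0 = 0 := hp_off 0 (by rintro ⟨m, hm⟩; have := hepos m; omega)
  have hptsum : (∑' j : ℕ, p (j + 1)) = 1 := by
    have h1 : (∑' j : ℕ, p j) = ∑' m : ℕ, q m := by
      rw [← heinj.tsum_eq (f := p)]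
      · exact tsum_congr fun m => hp_at m
      · intro x hx
        by_contra hxr
        exact hx (hp_off x hxr)
    have h2 := Summable.tsum_eq_zero_add hpsum
    rw [hp0, zero_add] at h2
    rw [← h2, h1, hqtsum]
  refine ⟨p, n, fun i => n i + 1, 1 / 2, hp_nonneg, hptsum, hnmono, ?_, hnpos,
    fun i => Nat.succ_pos (n i), le_refl _, by norm_num, ?_⟩
  · intro a b hab
    show n a + 1 < n b + 1
    have := hnmono hab; omega
  have hek : ∀ m, 1 ≤ m → e m = n m + 1 := by
    intro m hm
    obtain ⟨m', rfl⟩ : ∃ m', m = m' + 1 := ⟨m - 1, by omega⟩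
    exact hes m'
  have hqk : ∀ m, 1 ≤ m → q m = R (n m) / 2 := by
    intro m hm
    obtain ⟨m', rfl⟩ : ∃ m', m = m' + 1 := ⟨m - 1, by omega⟩
    exact hqs m'
  intro i hi
  have hei : e i = n i + 1 := hek i hi
  have hpk : p (n i + 1) = R (n i) / 2 := by
    rw [← hei, hp_at i, hqk i hi]
  have hnipos : (0 : ℝ) < (n i : ℝ) := by exact_mod_cast hnpos i
  refine ⟨?_, ?_, ?_⟩
  · -- tail bound
    set φ : ℕ → ℕ := fun j => e (i + 1 + j) - (n i + 1 + 1) with hφ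
    have hkey : ∀ j, n i + 1 + 1 + φ j = e (i + 1 + j) := by
      intro j
      have h1 : e i < e (i + 1 + j) := hemono (by omega)
      rw [hei] at h1
      simp only [hφ]
      omega
    have hφmono : StrictMono φ := by
      intro a b hab
      have h1 := hemono (show i + 1 + a < i + 1 + b by omega)
      have h2 := hkey a
      have h3 := hkey b
      omega
    have hFsupp : ∀ x, x ∉ Set.range φ → p (n i + 1 + 1 + x) = 0 := by
      intro x hx
      apply hp_off
      rintro ⟨m, hm⟩
      have hmi : i < m := by
        by_contra h
        have h2 : e m ≤ e i := hemono.monotone (by omega)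
        rw [hei] at h2
        omega
      obtain ⟨j, rfl⟩ : ∃ j, m = i + 1 + j := ⟨m - (i + 1), by omega⟩
      refine hx ⟨j, ?_⟩
      have := hkey j
      omega
    have htail_eq : (∑' j : ℕ, p (n i + 1 + 1 + j)) = ∑' j : ℕ, q (i + 1 + j) := by
      rw [← hφmono.injective.tsum_eq (f := fun x => p (n i + 1 + 1 + x))
        (Function.support_subset_iff'.mpr hFsupp)]
      refine tsum_congr fun j => ?_
      show p (n i + 1 + 1 + φ j) = q (i + 1 + j)
      rw [hkey j, hp_at (i + 1 + j)]
    have hterm : ∀ j : ℕ, q (i + 1 + j) ≤ (1 / (2 * (n i : ℝ))) * (1 / 2) ^ j := by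
      intro j
      have h2 : i + 1 + j = (i + j) + 1 := by omega
      rw [h2, hqs (i + j)]
      have h1 := hRn (i + j)
      have hni : (1 : ℝ) ≤ (n i : ℝ) := by exact_mod_cast hnpos i
      have hnij : (n i : ℝ) ≤ (n (i + j) : ℝ) :=
        Nat.cast_le.mpr (hnmono.monotone (Nat.le_add_right i j))
      have hp2 : (2 : ℝ) ^ (j + 1) ≤ 2 ^ (i + j + 2) := by
        apply pow_le_pow_right₀ (by norm_num)
        omega
      have hpos1 : (0 : ℝ) < 2 ^ (j + 1) * (n i : ℝ) := by positivity
      have h3 : 1 / (2 ^ (i + j + 2) * ((n (i + j)) : ℝ)) ≤ 1 / (2 ^ (j + 1) * (n i : ℝ)) := by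
        apply one_div_le_one_div_of_le hpos1
        exact mul_le_mul hp2 hnij (by positivity) (by positivity)
      have hR0 := (hnR ((i + j) + 1)).1
      have heq : (1 / (2 * (n i : ℝ))) * (1 / 2) ^ j = 1 / (2 ^ (j + 1) * (n i : ℝ)) := by
        rw [div_pow, one_pow, pow_succ]
        field_simp
      rw [heq]
      have := h1.trans h3
      linarith
    have hssum : Summable (fun j : ℕ => q (i + 1 + j)) := by
      apply hqsum.comp_injective
      intro a b hab
      omega
    have hgsum2 : Summable (fun j : ℕ => (1 / (2 * (n i : ℝ))) * (1 / 2) ^ j) :=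
      (summable_geometric_of_lt_one (by norm_num) (by norm_num)).mul_left _
    have hgt2 : (∑' j : ℕ, (1 / (2 * (n i : ℝ))) * (1 / 2) ^ j) = 1 / (n i : ℝ) := by
      rw [tsum_mul_left, tsum_geometric_of_lt_one (by norm_num) (by norm_num)]
      rw [show ((1 : ℝ) - 1 / 2)⁻¹ = 2 by norm_num]
      field_simp
    calc (∑' j : ℕ, p (n i + 1 + 1 + j)) = ∑' j : ℕ, q (i + 1 + j) := htail_eq
      _ ≤ ∑' j : ℕ, (1 / (2 * (n i : ℝ))) * (1 / 2) ^ j := Summable.tsum_le_tsum hterm hssum hgsum2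
      _ = 1 / (n i : ℝ) := hgt2
  · rw [hpk]
    have h1 := (hnR i).2
    have h0 := (hnR i).1
    push_cast
    nlinarith
  · rw [hpk]; ring
end

section
/- Lemma B.3 (game values are countable ordinals): Let 𝒳_t (t ≥ 1) be Polish spaces and 𝒴_t (t ≥ 1) be countable sets, and let 𝖶 ⊆ Π_{t≥1}(𝒳_t × 𝒴_t) be finitely decidable and coanalytic. Then for every position v: if v is active and the relation ≺_v on active decision trees with starting position v is well-founded, then the rank ρ_{≺_v}(∅) of the empty tree is strictly less than ω₁ (the first uncountable ordinal). Equivalently, for every position v, either val(v) = Ω or val(v) < ω₁. -/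
universe u

variable {X Y : ℕ → Type u}

/-- `𝖶` is finitely decidable. -/
def FinitelyDecidable (W : Set (∀ t : ℕ, X t × Y t)) : Prop :=
  ∀ w ∈ W, ∃ n : ℕ, ∀ w' : ∀ t : ℕ, X t × Y t, (∀ t < n, w' t = w t) → w' ∈ W

/-- A position `v` of length `n` is active: some infinite continuation avoids `𝖶`. -/
def ActivePos (W : Set (∀ t : ℕ, X t × Y t)) {n : ℕ}
    (v : ∀ s : Fin n, X s.val × Y s.val) : Prop :=
  ∃ w : ∀ t : ℕ, X t × Y t, w ∉ W ∧ ∀ s : Fin n, w s.val = v s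

/-- A decision tree of depth `m` with starting position of length `k`: the node at level `j`
is labelled by a point of `𝒳_{k+j+1}` and is indexed by the `P_L`-labels along the path to it. -/
def DTree (X Y : ℕ → Type u) (k m : ℕ) : Type u :=
  ∀ j : Fin m, ((∀ i : Fin j.val, Y (k + i.val)) → X (k + j.val))

/-- A decision tree is active if every branch leads to an active position. -/
def ActiveDTree (W : Set (∀ t : ℕ, X t × Y t)) {k : ℕ}
    (v : ∀ s : Fin k, X s.val × Y s.val) {m : ℕ} (τ : DTree X Y k m) : Prop :=
  ∀ y : ∀ j : Fin m, Y (k + j.val),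
    ∃ w : ∀ t : ℕ, X t × Y t, w ∉ W ∧ (∀ s : Fin k, w s.val = v s) ∧
      ∀ j : Fin m, w (k + j.val) =
        (τ j fun i : Fin j.val => y ⟨i.val, i.isLt.trans j.isLt⟩, y j)

/-- The relation `≺_v` on decision trees with starting position `v`: `t' ≺_v t` iff both are
active and `t` is obtained from `t'` by removing its leaves. -/
def TreePrec (W : Set (∀ t : ℕ, X t × Y t)) {k : ℕ}
    (v : ∀ s : Fin k, X s.val × Y s.val) :
    (Σ m : ℕ, DTree X Y k m) → (Σ m : ℕ, DTree X Y k m) → Prop :=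
  fun t' t =>
    ActiveDTree W v t'.2 ∧ ActiveDTree W v t.2 ∧ t'.1 = t.1 + 1 ∧
      ∀ (j : ℕ) (hj : j < t.1) (hj' : j < t'.1) (y : ∀ i : Fin j, Y (k + i.val)),
        t.2 ⟨j, hj⟩ y = t'.2 ⟨j, hj'⟩ y

/-- The empty decision tree (depth `0`). -/
def emptyDTree (X Y : ℕ → Type u) (k : ℕ) : DTree X Y k 0 := fun j => j.elim0

/-!
Kunen–Martin: a well-founded relation `r` whose graph is analytic, say the image of a continuous
`f : (ℕ → ℕ) → α × α`, has all ranks countable. Finite `r`-chains `x_k r … r x_0` are approximated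
by the length-`k` prefixes of codes `z_i` with `f (z_i) = (x_{i+1}, x_i)`; these approximations
form a countable relation into which every descending `r`-chain embeds, and an infinite
descending chain of approximations converges to codes of an infinite descending `r`-chain.

For the game, `≺_v` is analytic: being active is a countable intersection (over the branches) of
projections of `Wᶜ` cut down by closed conditions, and `≺_v` is the image of the active trees
whose pruning is active under `τ ↦ (τ, prune τ)`.
-/

open Set Filter Topology MeasureTheory
open scoped Ordinal

section Rank

variable {α : Type u} {β : Type*} {r : α → α → Prop} {a : α}

theorem Acc.rank_lt_omega_one [Countable α] (h : Acc r a) : h.rank < ω₁ := by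
  induction h with
  | intro a _ ih =>
    rw [Acc.rank_eq]
    exact Ordinal.iSup_lt_omega_one fun b => (Cardinal.isSuccLimit_omega 1).succ_lt (ih b b.2)

theorem Acc.rank_le_of_simulation {s : β → β → Prop} {S : α → β → Prop} {φ : β → Ordinal.{u}}
    (hφ : ∀ b' b, s b' b → φ b' < φ b) (hS : ∀ x b, S x b → ∀ y, r y x → ∃ b', s b' b ∧ S y b')
    (h : Acc r a) {b : β} (hab : S a b) : h.rank ≤ φ b := by
  induction h generalizing b with
  | intro a _ ih =>
    rw [Acc.rank_eq]
    refine Ordinal.iSup_le fun ⟨y, hy⟩ => Order.succ_le_of_lt ?_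
    obtain ⟨b', hb', hyb'⟩ := hS a b hab y hy
    exact (ih y hy hyb').trans_lt (hφ b' b hb')

end Rank

namespace KunenMartin

variable {α : Type*} (f : (ℕ → ℕ) → α × α)

/-- `⟨k, s⟩` stands for `k` codes `z_0, …, z_{k-1}` known up to their length-`k` prefixes `s i`. -/
abbrev Approx : Type := Σ k : ℕ, Fin k → Fin k → ℕ

def cylinder (a : Approx) : Set (ℕ → ℕ → ℕ) := {z | ∀ i j : Fin a.1, z i j = a.2 i j}

def IsChain (k : ℕ) (z : ℕ → ℕ → ℕ) : Prop := ∀ i, i + 1 < k → (f (z i)).1 = (f (z (i + 1))).2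

def ApproxRel (a' a : Approx) : Prop :=
  a'.1 = a.1 + 1 ∧ cylinder a' ⊆ cylinder a ∧ ∃ z ∈ cylinder a', IsChain f a'.1 z

/-- `a` is the prefix data of codes `z_0, …, z_{k-1}` with `f (z_i) = (x_{i+1}, x_i)` for some
`x_0, …, x_k = x`. -/
def Realizes (x : α) (a : Approx) : Prop :=
  ∃ z ∈ cylinder a, IsChain f a.1 z ∧ ∀ i, i + 1 = a.1 → (f (z i)).1 = x

theorem realizes_nil (x : α) : Realizes f x ⟨0, fun i => i.elim0⟩ :=
  ⟨fun _ _ => 0, fun i => i.elim0, fun _ h => (Nat.not_lt_zero _ h).elim,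
    fun i h => (Nat.succ_ne_zero i h).elim⟩

theorem exists_approxRel_realizes {r : α → α → Prop} (hfr : {p : α × α | r p.1 p.2} ⊆ range f)
    {x y : α} {a : Approx} (hxa : Realizes f x a) (hyx : r y x) :
    ∃ a', ApproxRel f a' a ∧ Realizes f y a' := by
  obtain ⟨z, hz, hchain, hlast⟩ := hxa
  obtain ⟨w, hw⟩ := hfr (show r (y, x).1 (y, x).2 from hyx)
  set z' := Function.update z a.1 w
  have hz'_lt : ∀ i < a.1, z' i = z i := fun i hi => Function.update_of_ne hi.ne _ _
  have hz'_last : z' a.1 = w := Function.update_self _ _ _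
  have hchain' : IsChain f (a.1 + 1) z' := by
    intro i hi
    rw [hz'_lt i (by omega)]
    rcases (Nat.lt_succ_iff.1 hi).lt_or_eq with hi | hi
    · rw [hz'_lt (i + 1) hi]
      exact hchain i hi
    · rw [hi, hz'_last, hw, hlast i hi]
  refine ⟨⟨a.1 + 1, fun i j => z' i j⟩, ⟨rfl, ?_, z', fun _ _ => rfl, hchain'⟩,
    z', fun _ _ => rfl, hchain', fun i hi => ?_⟩
  · intro u hu i j
    calc u i j = z' i j := hu i.castSucc j.castSucc
      _ = a.2 i j := by rw [hz'_lt i i.isLt, hz i j]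
  · rw [Nat.succ_injective hi, hz'_last, hw]

theorem approxRel_wellFounded [TopologicalSpace α] [T2Space α] {r : α → α → Prop}
    (hf : Continuous f) (hfr : range f ⊆ {p : α × α | r p.1 p.2}) (hr : WellFounded r) :
    WellFounded (ApproxRel f) := by
  rw [wellFounded_iff_isEmpty_descending_chain]
  refine ⟨fun ⟨g, hg⟩ => ?_⟩
  choose z hz hchain using fun p => (hg p).2.2
  have hlen : ∀ p, (g p).1 = (g 0).1 + p := by
    intro p
    induction p with
    | zero => rfl
    | succ p ih => rw [(hg p).1, ih, Nat.add_assoc]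
  have hnest : Antitone fun p => cylinder (g p) := antitone_nat_of_succ_le fun p => (hg p).2.1
  have hstable : ∀ i j q, i + j ≤ q → z q i j = z (i + j) i j := by
    intro i j q hq
    have hi : i < (g (i + j + 1)).1 := by rw [hlen]; omega
    have hj : j < (g (i + j + 1)).1 := by rw [hlen]; omega
    rw [hnest (by omega : i + j + 1 ≤ q + 1) (hz q) ⟨i, hi⟩ ⟨j, hj⟩, hz (i + j) ⟨i, hi⟩ ⟨j, hj⟩]
  set Z : ℕ → ℕ → ℕ := fun i j => z (i + j) i j
  have hlim : Tendsto z atTop (𝓝 Z) := by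
    refine tendsto_pi_nhds.2 fun i => tendsto_pi_nhds.2 fun j => ?_
    exact tendsto_const_nhds.congr'
      (eventually_atTop.2 ⟨i + j, fun q hq => (hstable i j q hq).symm⟩)
  have hZchain : ∀ i, (f (Z i)).1 = (f (Z (i + 1))).2 := by
    intro i
    have hclosed : IsClosed {z : ℕ → ℕ → ℕ | (f (z i)).1 = (f (z (i + 1))).2} :=
      isClosed_eq (by fun_prop) (by fun_prop)
    exact hclosed.mem_of_tendsto hlim
      (eventually_atTop.2 ⟨i + 1, fun q hq => hchain q i (by rw [hlen]; omega)⟩)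
  refine (wellFounded_iff_isEmpty_descending_chain.1 hr).false ⟨fun i => (f (Z i)).2, fun i => ?_⟩
  show r (f (Z (i + 1))).2 (f (Z i)).2
  rw [← hZchain i]
  exact hfr (mem_range_self (Z i))

end KunenMartin

theorem WellFounded.rank_lt_omega_one_of_analyticSet {α : Type u} [TopologicalSpace α]
    [T2Space α] {r : α → α → Prop} (hr : WellFounded r)
    (hA : AnalyticSet {p : α × α | r p.1 p.2}) (x : α) : (hr.apply x).rank < ω₁ := by
  rw [AnalyticSet] at hA
  rcases hA with hempty | ⟨f, hf, hfr⟩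
  · calc (hr.apply x).rank ≤ 0 := by
          rw [Acc.rank_eq]
          refine Ordinal.iSup_le fun ⟨y, hy⟩ => ?_
          exact absurd (show (y, x) ∈ {p : α × α | r p.1 p.2} from hy) (hempty ▸ notMem_empty _)
      _ < ω₁ := Ordinal.omega_pos 1
  · have hwf := KunenMartin.approxRel_wellFounded f hf hfr.subset hr
    calc (hr.apply x).rank ≤ Ordinal.lift.{u} (hwf.apply ⟨0, fun i => i.elim0⟩).rank :=
          (hr.apply x).rank_le_of_simulation
            (φ := fun a => Ordinal.lift.{u} (hwf.apply a).rank)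
            (fun _ _ h => Ordinal.lift_lt.2 (Acc.rank_lt_of_rel _ h))
            (fun _ _ hxa _ hyx => KunenMartin.exists_approxRel_realizes f hfr.superset hxa hyx)
            (KunenMartin.realizes_nil f x)
      _ < ω₁ := Ordinal.lift_lt_omega_one.2 (Acc.rank_lt_omega_one _)

namespace MeasureTheory

variable {α : Type*} [TopologicalSpace α]

theorem AnalyticSet.inter [T2Space α] {s t : Set α} (hs : AnalyticSet s) (ht : AnalyticSet t) :
    AnalyticSet (s ∩ t) := by
  rw [inter_eq_iInter]
  exact AnalyticSet.iInter (Bool.forall_bool.2 ⟨ht, hs⟩)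

theorem AnalyticSet.iInter_of_polishSpace [PolishSpace α] {ι : Type*} [Countable ι]
    {s : ι → Set α} (hs : ∀ i, AnalyticSet (s i)) : AnalyticSet (⋂ i, s i) := by
  cases isEmpty_or_nonempty ι
  · rw [iInter_of_empty]
    exact isClosed_univ.analyticSet
  · exact AnalyticSet.iInter hs

end MeasureTheory

def DTree.prune {k m : ℕ} (τ : DTree X Y k (m + 1)) : DTree X Y k m :=
  fun j => τ ⟨j, Nat.lt_succ_of_lt j.isLt⟩

theorem setOf_activeDTree_eq_iInter (W : Set (∀ t : ℕ, X t × Y t)) {k : ℕ}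
    (v : ∀ s : Fin k, X s.val × Y s.val) (m : ℕ) :
    {τ : DTree X Y k m | ActiveDTree W v τ} =
      ⋂ y : (∀ j : Fin m, Y (k + j.val)), Prod.fst ''
        (Prod.snd ⁻¹' Wᶜ ∩ {p : DTree X Y k m × (∀ t, X t × Y t) | (∀ s : Fin k, p.2 s = v s) ∧
          ∀ j : Fin m, p.2 (k + j) = (p.1 j fun i => y ⟨i, i.isLt.trans j.isLt⟩, y j)}) := by
  ext τ
  simp only [mem_ofPred_eq, ActiveDTree, mem_iInter, mem_image, mem_inter_iff, mem_preimage,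
    mem_compl_iff, Prod.exists, exists_and_right, exists_eq_right]

theorem setOf_treePrec_eq_iUnion (W : Set (∀ t : ℕ, X t × Y t)) {k : ℕ}
    (v : ∀ s : Fin k, X s.val × Y s.val) :
    {p : (Σ m, DTree X Y k m) × (Σ m, DTree X Y k m) | TreePrec W v p.1 p.2} =
      ⋃ m : ℕ, (fun τ : DTree X Y k (m + 1) =>
          ((⟨m + 1, τ⟩ : Σ m, DTree X Y k m), (⟨m, τ.prune⟩ : Σ m, DTree X Y k m))) ''
        ({τ | ActiveDTree W v τ} ∩ DTree.prune ⁻¹' {τ | ActiveDTree W v τ}) := by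
  ext ⟨⟨m', τ'⟩, ⟨m, τ⟩⟩
  simp only [mem_ofPred_eq, mem_iUnion, mem_image, mem_inter_iff, mem_preimage]
  constructor
  · rintro ⟨hτ', hτ, rfl, hagree⟩
    have hprune : τ'.prune = τ := funext fun j => funext fun u => (hagree j j.isLt _ u).symm
    exact ⟨m, τ', ⟨hτ', hprune ▸ hτ⟩, by rw [hprune]⟩
  · rintro ⟨m, τ, ⟨hτ, hprune⟩, heq⟩
    simp only [Prod.mk.injEq] at heq
    obtain ⟨h₁, h₂⟩ := heq
    cases h₁
    cases h₂
    exact ⟨hτ, hprune, rfl, fun _ _ _ _ => rfl⟩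

section DecisionTreeTopology

variable [∀ t, TopologicalSpace (X t)]

instance (k m : ℕ) : TopologicalSpace (DTree X Y k m) := Pi.topologicalSpace

instance [∀ t, PolishSpace (X t)] [∀ t, Countable (Y t)] (k m : ℕ) :
    PolishSpace (DTree X Y k m) :=
  inferInstanceAs (PolishSpace (∀ j : Fin m, (∀ i : Fin j.val, Y (k + i.val)) → X (k + j.val)))

theorem DTree.continuous_prune {k m : ℕ} :
    Continuous (DTree.prune (X := X) (Y := Y) (k := k) (m := m)) :=
  continuous_pi fun _ => continuous_apply _

variable [∀ t, PolishSpace (X t)] [∀ t, TopologicalSpace (Y t)] [∀ t, DiscreteTopology (Y t)]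
  [∀ t, Countable (Y t)]

theorem analyticSet_setOf_activeDTree {W : Set (∀ t : ℕ, X t × Y t)} (hW : AnalyticSet Wᶜ)
    {k : ℕ} (v : ∀ s : Fin k, X s.val × Y s.val) (m : ℕ) :
    AnalyticSet {τ : DTree X Y k m | ActiveDTree W v τ} := by
  rw [setOf_activeDTree_eq_iInter]
  refine AnalyticSet.iInter_of_polishSpace fun y => ?_
  refine ((hW.preimage continuous_snd).inter (IsClosed.analyticSet ?_)).image_of_continuous
    continuous_fst
  simp only [ofPred_and, ofPred_forall]
  exact (isClosed_iInter fun s => isClosed_eq (by fun_prop) continuous_const).inter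
    (isClosed_iInter fun j => isClosed_eq (by fun_prop) (by fun_prop))

theorem analyticSet_setOf_treePrec {W : Set (∀ t : ℕ, X t × Y t)} (hW : AnalyticSet Wᶜ)
    {k : ℕ} (v : ∀ s : Fin k, X s.val × Y s.val) :
    AnalyticSet {p : (Σ m, DTree X Y k m) × (Σ m, DTree X Y k m) | TreePrec W v p.1 p.2} := by
  rw [setOf_treePrec_eq_iUnion]
  refine AnalyticSet.iUnion fun m => ?_
  refine ((analyticSet_setOf_activeDTree hW v _).inter
    ((analyticSet_setOf_activeDTree hW v m).preimage DTree.continuous_prune)).image_of_continuous ?_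
  exact continuous_sigmaMk.prodMk (continuous_sigmaMk.comp DTree.continuous_prune)

end DecisionTreeTopology

theorem game_value_countable_general
    [∀ t, TopologicalSpace (X t)] [∀ t, PolishSpace (X t)]
    [∀ t, TopologicalSpace (Y t)] [∀ t, DiscreteTopology (Y t)] [∀ t, Countable (Y t)]
    (W : Set (∀ t : ℕ, X t × Y t))
    (hco : MeasureTheory.AnalyticSet Wᶜ)
    {n : ℕ} (v : ∀ s : Fin n, X s.val × Y s.val)
    (hwf : WellFounded (TreePrec W v)) :
    (hwf.apply (⟨0, emptyDTree X Y n⟩ : Σ m : ℕ, DTree X Y n m)).rank <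
      (Cardinal.aleph 1).ord := by
  rw [Cardinal.ord_aleph]
  exact hwf.rank_lt_omega_one_of_analyticSet (analyticSet_setOf_treePrec hco v) _

/-- **Lemma B.3 (game values are countable ordinals).** Let `𝒳_t` be Polish, `𝒴_t` countable
discrete, and `𝖶` finitely decidable and coanalytic. For every active position `v` such that
the relation `≺_v` on active decision trees is well-founded, the rank of the empty tree is
strictly less than `ω₁` (the first uncountable ordinal); equivalently, every position has game
value `Ω` or a countable ordinal. -/
theorem game_value_countable
    [∀ t, TopologicalSpace (X t)] [∀ t, PolishSpace (X t)]
    [∀ t, TopologicalSpace (Y t)] [∀ t, DiscreteTopology (Y t)] [∀ t, Countable (Y t)]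
    (W : Set (∀ t : ℕ, X t × Y t))
    (hfd : FinitelyDecidable W) (hco : MeasureTheory.AnalyticSet Wᶜ)
    {n : ℕ} (v : ∀ s : Fin n, X s.val × Y s.val)
    (hact : ActivePos W v) (hwf : WellFounded (TreePrec W v)) :
    (hwf.apply (⟨0, emptyDTree X Y n⟩ : Σ m : ℕ, DTree X Y n m)).rank <
      (Cardinal.aleph 1).ord :=
  game_value_countable_general W hco v hwf
end

section
/- Proposition B.4 (value decrease): Let 𝒳_t (t ≥ 1) be sets and 𝒴_t (t ≥ 1) be countable sets, and let 𝖶 ⊆ Π_{t≥1}(𝒳_t × 𝒴_t) be finitely decidable. Fix 0 ≤ n < ∞ and a position v ∈ 𝖯_n with 0 ≤ val(v) < Ω (i.e., v is active and the relation ≺_v on active decision trees with starting position v is well-founded). Then for every x ∈ 𝒳_{n+1} there exists y ∈ 𝒴_{n+1} such that val(v,x,y) < val(v): that is, either the position (v,x,y) is inactive, or ≺_{(v,x,y)} is well-founded and ρ_{≺_{(v,x,y)}}(∅) < ρ_{≺_v}(∅). -/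
universe u

variable {X Y : ℕ → Type u}

/-! ### Auxiliary machinery for the proof -/


def cF (F : ℕ → Type u) {a b : ℕ} (h : a = b) (t : F a) : F b := h ▸ t

@[simp] lemma cF_rfl (F : ℕ → Type u) {a : ℕ} (t : F a) : cF F rfl t = t := rfl

lemma cF_symm_cF (F : ℕ → Type u) {a b : ℕ} (h : a = b) (t : F b) :
    cF F h (cF F h.symm t) = t := by cases h; rfl

lemma cast_out' {a b : ℕ} (h : a = b) (w : ∀ t : ℕ, X t × Y t) (p : X a) (q : Y b)
    (hw : w a = (p, cF Y h.symm q)) : w b = (cF X h p, q) := by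
  cases h; exact hw

lemma pos_snoc_iff {n : ℕ} (v : ∀ s : Fin n, X s.val × Y s.val) (p : X n × Y n)
    (w : ∀ t : ℕ, X t × Y t) :
    (∀ s : Fin (n+1), w s.val = Fin.snoc (α := fun s : Fin (n+1) => X s.val × Y s.val) v p s) ↔
      ((∀ s : Fin n, w s.val = v s) ∧ w n = p) := by
  constructor
  · intro h
    refine ⟨fun s => ?_, ?_⟩
    · have := h (Fin.castSucc s)
      rwa [Fin.snoc_castSucc] at this
    · have := h (Fin.last n)
      rwa [Fin.snoc_last] at this
  · rintro ⟨h1, h2⟩ s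
    refine Fin.lastCases ?_ ?_ s
    · rw [Fin.snoc_last]; exact h2
    · intro i; rw [Fin.snoc_castSucc]; exact h1 i

lemma activeDTree_empty_iff (W : Set (∀ t : ℕ, X t × Y t)) {k : ℕ}
    (u : ∀ s : Fin k, X s.val × Y s.val) :
    ActiveDTree W u (emptyDTree X Y k) ↔ ActivePos W u := by
  constructor
  · intro h
    obtain ⟨w, h1, h2, -⟩ := h (fun j => j.elim0)
    exact ⟨w, h1, h2⟩
  · rintro ⟨w, h1, h2⟩ y
    exact ⟨w, h1, h2, fun j => j.elim0⟩

/-! Assembling a family of trees at positions `(v,x,y)` into one tree at `v` -/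

def asm {n m : ℕ} (x : X n) (τ : Y n → DTree X Y (n+1) m) : DTree X Y n (m+1) :=
  fun j =>
    match j with
    | ⟨0, _⟩ => fun _ => x
    | ⟨j'+1, hj⟩ => fun ys =>
        cF X (Nat.succ_add n j')
          (τ (ys ⟨0, Nat.succ_pos j'⟩) ⟨j', Nat.lt_of_succ_lt_succ hj⟩
            (fun i => cF Y (Nat.succ_add n i.val).symm
              (ys ⟨i.val + 1, Nat.succ_lt_succ i.isLt⟩)))

lemma activeDTree_asm {n m : ℕ} {W : Set (∀ t : ℕ, X t × Y t)}
    {v : ∀ s : Fin n, X s.val × Y s.val} {x : X n} {τ : Y n → DTree X Y (n+1) m}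
    (h : ∀ y₀ : Y n,
      ActiveDTree W (Fin.snoc (α := fun s : Fin (n+1) => X s.val × Y s.val) v (x, y₀)) (τ y₀)) :
    ActiveDTree W v (asm x τ) := by
  intro Yp
  obtain ⟨w, hwW, hpos, hbr⟩ :=
    h (Yp ⟨0, Nat.succ_pos m⟩)
      (fun j => cF Y (Nat.succ_add n j.val).symm (Yp ⟨j.val + 1, Nat.succ_lt_succ j.isLt⟩))
  refine ⟨w, hwW, ((pos_snoc_iff v _ w).mp hpos).1, ?_⟩
  rintro ⟨(_|jv), hj⟩
  · exact ((pos_snoc_iff v _ w).mp hpos).2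
  · exact cast_out' (Nat.succ_add n jv) w _ _ (hbr ⟨jv, Nat.lt_of_succ_lt_succ hj⟩)

lemma treePrec_asm {n m : ℕ} (W : Set (∀ t : ℕ, X t × Y t))
    (v : ∀ s : Fin n, X s.val × Y s.val) (x : X n)
    (τ : Y n → DTree X Y (n+1) m) (σ : Y n → DTree X Y (n+1) (m+1))
    (h : ∀ y₀ : Y n,
      TreePrec W (Fin.snoc (α := fun s : Fin (n+1) => X s.val × Y s.val) v (x, y₀))
        ⟨m+1, σ y₀⟩ ⟨m, τ y₀⟩) :
    TreePrec W v ⟨m+2, asm x σ⟩ ⟨m+1, asm x τ⟩ := by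
  refine ⟨activeDTree_asm (fun y₀ => (h y₀).1), activeDTree_asm (fun y₀ => (h y₀).2.1),
    rfl, ?_⟩
  rintro (_|j) hj hj' ys
  · rfl
  · exact congrArg (cF X (Nat.succ_add n j))
      ((h (ys ⟨0, Nat.succ_pos j⟩)).2.2.2 j (Nat.lt_of_succ_lt_succ hj)
        (Nat.lt_of_succ_lt_succ hj') _)

/-! Truncation of trees; well-foundedness follows from accessibility of the empty tree -/

def trunc {k m : ℕ} (τ : DTree X Y k (m+1)) : DTree X Y k m :=
  fun j => τ ⟨j.val, Nat.lt_succ_of_lt j.isLt⟩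

lemma active_trunc {k m : ℕ} {W : Set (∀ t : ℕ, X t × Y t)}
    {u : ∀ s : Fin k, X s.val × Y s.val} (w₀ : ∀ t : ℕ, X t × Y t)
    {τ : DTree X Y k (m+1)} (hτ : ActiveDTree W u τ) : ActiveDTree W u (trunc τ) := by
  intro y
  set yp : ∀ j : Fin (m+1), Y (k + j.val) :=
    Fin.snoc (α := fun j : Fin (m+1) => Y (k + j.val)) y ((w₀ (k+m)).2) with hyp
  obtain ⟨w, h1, h2, h3⟩ := hτ yp
  have e1 : ∀ (i : Fin m), yp (Fin.castSucc i) = y i := fun i => Fin.snoc_castSucc _ _ _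
  refine ⟨w, h1, h2, fun j => ?_⟩
  have hb := h3 ⟨j.val, Nat.lt_succ_of_lt j.isLt⟩
  have e2 : (fun i : Fin j.val => yp ⟨i.val, Nat.lt_succ_of_lt (i.isLt.trans j.isLt)⟩) =
      (fun i : Fin j.val => y ⟨i.val, i.isLt.trans j.isLt⟩) :=
    funext fun i => e1 ⟨i.val, i.isLt.trans j.isLt⟩
  have e3 : yp ⟨j.val, Nat.lt_succ_of_lt j.isLt⟩ = y j := e1 j
  rw [show (fun i : Fin j.val => yp ⟨i.val, Nat.lt_succ_of_lt (i.isLt.trans j.isLt)⟩) =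
      (fun i : Fin j.val => y ⟨i.val, i.isLt.trans j.isLt⟩) from e2, e3] at hb
  exact hb

lemma prec_trunc {k m : ℕ} (W : Set (∀ t : ℕ, X t × Y t))
    (u : ∀ s : Fin k, X s.val × Y s.val) (w₀ : ∀ t : ℕ, X t × Y t)
    {τ : DTree X Y k (m+1)} (hτ : ActiveDTree W u τ) :
    TreePrec W u ⟨m+1, τ⟩ ⟨m, trunc τ⟩ :=
  ⟨hτ, active_trunc w₀ hτ, rfl, fun _ _ _ _ => rfl⟩

lemma wf_of_acc_empty {k : ℕ} (W : Set (∀ t : ℕ, X t × Y t))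
    (u : ∀ s : Fin k, X s.val × Y s.val) (w₀ : ∀ t : ℕ, X t × Y t)
    (h0 : Acc (TreePrec W u) ⟨0, emptyDTree X Y k⟩) : WellFounded (TreePrec W u) := by
  have key : ∀ (m : ℕ) (τ : DTree X Y k m), Acc (TreePrec W u) ⟨m, τ⟩ := by
    intro m
    induction m with
    | zero =>
      intro τ
      have : τ = emptyDTree X Y k := funext fun j => j.elim0
      rw [this]; exact h0
    | succ m ih =>
      intro τ
      by_cases hτ : ActiveDTree W u τ
      · exact (ih (trunc τ)).inv (prec_trunc W u w₀ hτ)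
      · exact Acc.intro _ fun t' h' => absurd h'.2.1 hτ
  exact ⟨fun t => key t.1 t.2⟩

lemma rank_asm (W : Set (∀ t : ℕ, X t × Y t)) {n : ℕ}
    (v : ∀ s : Fin n, X s.val × Y s.val) (hwf : WellFounded (TreePrec W v)) (x : X n) :
    ∀ β : Ordinal.{u}, ∀ (m : ℕ) (τ : Y n → DTree X Y (n+1) m),
      (∀ y₀ : Y n,
        ActiveDTree W (Fin.snoc (α := fun s : Fin (n+1) => X s.val × Y s.val) v (x, y₀)) (τ y₀)) →
      (∀ (y₀ : Y n)
        (h : Acc (TreePrec W (Fin.snoc (α := fun s : Fin (n+1) => X s.val × Y s.val) v (x, y₀)))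
          ⟨m, τ y₀⟩), β ≤ h.rank) →
      β ≤ (hwf.apply ⟨m+1, asm x τ⟩).rank := by
  intro β
  induction β using Ordinal.induction with
  | h β IH =>
    intro m τ hτact hτrk
    by_contra hlt
    push_neg at hlt
    -- hlt : (hwf.apply ⟨m+1, asm x τ⟩).rank < β
    set ρ := (hwf.apply ⟨m+1, asm x τ⟩).rank with hρ
    have choice : ∀ y₀ : Y n, ∃ σ : DTree X Y (n+1) (m+1),
        TreePrec W (Fin.snoc (α := fun s : Fin (n+1) => X s.val × Y s.val) v (x, y₀))
          ⟨m+1, σ⟩ ⟨m, τ y₀⟩ ∧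
        ∀ h' : Acc (TreePrec W (Fin.snoc (α := fun s : Fin (n+1) => X s.val × Y s.val) v (x, y₀)))
          ⟨m+1, σ⟩, ρ ≤ h'.rank := by
      intro y₀
      by_cases hacc : Acc (TreePrec W
          (Fin.snoc (α := fun s : Fin (n+1) => X s.val × Y s.val) v (x, y₀))) ⟨m, τ y₀⟩
      · have hr : ρ < hacc.rank := lt_of_lt_of_le hlt (hτrk y₀ hacc)
        rw [hacc.rank_eq, Ordinal.lt_iSup_iff] at hr
        obtain ⟨⟨t', ht'⟩, hlt'⟩ := hr
        rw [Order.lt_succ_iff] at hlt'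
        obtain ⟨m', σ⟩ := t'
        have hm : m' = m + 1 := ht'.2.2.1
        subst hm
        exact ⟨σ, ht', fun h' => hlt'⟩
      · have hex : ∃ t', TreePrec W
            (Fin.snoc (α := fun s : Fin (n+1) => X s.val × Y s.val) v (x, y₀)) t' ⟨m, τ y₀⟩ ∧
            ¬ Acc (TreePrec W
              (Fin.snoc (α := fun s : Fin (n+1) => X s.val × Y s.val) v (x, y₀))) t' := by
          by_contra hno
          push_neg at hno
          exact hacc (Acc.intro _ fun t' h' => hno t' h')
        obtain ⟨t', hp, hna⟩ := hex
        obtain ⟨m', σ⟩ := t'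
        have hm : m' = m + 1 := hp.2.2.1
        subst hm
        exact ⟨σ, hp, fun h' => absurd h' hna⟩
    choose σ hσ hσrk using choice
    have hprec : TreePrec W v ⟨m+2, asm x σ⟩ ⟨m+1, asm x τ⟩ :=
      treePrec_asm W v x τ σ hσ
    have h1 : ρ ≤ (hwf.apply ⟨m+2, asm x σ⟩).rank :=
      IH ρ hlt (m+1) σ (fun y₀ => (hσ y₀).1) hσrk
    have h2 : (hwf.apply ⟨m+2, asm x σ⟩).rank < ρ :=
      Acc.rank_lt_of_rel (hwf.apply ⟨m+1, asm x τ⟩) hprec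
    exact absurd (h1.trans_lt h2) (lt_irrefl ρ)

/-- **Proposition B.4 (value decrease).** Suppose `𝖶` is finitely decidable, the position `v` is
active and the relation `≺_v` on decision trees with starting position `v` is well-founded
(i.e. `0 ≤ val(v) < Ω`). Then for every next move `x` of `P_A` there is a reply `y` of `P_L`
such that `val(v,x,y) < val(v)`: either the extended position is inactive, or `≺_{(v,x,y)}` is
well-founded and the rank of the empty tree strictly decreases. -/
theorem gale_stewart_value_decrease
    [∀ t, Countable (Y t)]
    (W : Set (∀ t : ℕ, X t × Y t)) (hfd : FinitelyDecidable W)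
    {n : ℕ} (v : ∀ s : Fin n, X s.val × Y s.val)
    (hact : ActivePos W v) (hwf : WellFounded (TreePrec W v)) (x : X n) :
    ∃ y : Y n,
      ¬ ActivePos W (Fin.snoc v (x, y)) ∨
      ∃ hwf' : WellFounded (TreePrec W (Fin.snoc v (x, y))),
        (hwf'.apply (⟨0, emptyDTree X Y (n + 1)⟩ : Σ m : ℕ, DTree X Y (n + 1) m)).rank <
          (hwf.apply (⟨0, emptyDTree X Y n⟩ : Σ m : ℕ, DTree X Y n m)).rank := by
  obtain ⟨w₀, -, -⟩ := id hact
  by_contra hcon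
  push_neg at hcon
  -- hcon : ∀ y, ActivePos W (snoc v (x,y)) ∧ ∀ hwf', rank₀ ≤ rank'
  have hemp : ActiveDTree W v (emptyDTree X Y n) := (activeDTree_empty_iff W v).mpr hact
  have hτact : ∀ y₀ : Y n,
      ActiveDTree W (Fin.snoc (α := fun s : Fin (n+1) => X s.val × Y s.val) v (x, y₀))
        (emptyDTree X Y (n+1)) :=
    fun y₀ => (activeDTree_empty_iff W _).mpr (hcon y₀).1
  have ht₁ : ActiveDTree W v (asm x fun _ => emptyDTree X Y (n+1)) :=
    activeDTree_asm hτact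
  have hprec1 : TreePrec W v ⟨1, asm x fun _ => emptyDTree X Y (n+1)⟩
      ⟨0, emptyDTree X Y n⟩ :=
    ⟨ht₁, hemp, rfl, fun j hj _ _ => absurd hj (Nat.not_lt_zero j)⟩
  set κ := (hwf.apply ⟨1, asm x fun _ => emptyDTree X Y (n+1)⟩).rank with hκdef
  set ρ₀ := (hwf.apply ⟨0, emptyDTree X Y n⟩).rank with hρ₀def
  have hκ : κ < ρ₀ := Acc.rank_lt_of_rel (hwf.apply ⟨0, emptyDTree X Y n⟩) hprec1
  have key := rank_asm W v hwf x (Order.succ κ) 0 (fun _ => emptyDTree X Y (n+1)) hτact ?_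
  · exact absurd (Order.succ_le_iff.mp key) (lt_irrefl κ)
  · intro y₀ h
    have hwf' : WellFounded (TreePrec W
        (Fin.snoc (α := fun s : Fin (n+1) => X s.val × Y s.val) v (x, y₀))) :=
      wf_of_acc_empty W _ w₀ h
    have hge : ρ₀ ≤ (hwf'.apply ⟨0, emptyDTree X Y (n+1)⟩).rank := (hcon y₀).2 hwf'
    calc Order.succ κ ≤ ρ₀ := Order.succ_le_of_lt hκ
      _ ≤ (hwf'.apply ⟨0, emptyDTree X Y (n+1)⟩).rank := hge
      _ = h.rank := rfl
end
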